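/- arXiv:0710.0810 — 12 statements merged into one kernel-verified Lean document; each statement's English description precedes it below -/
import Mathlib

section
/- Let F be an algebraically closed field with a nonidentity involution λ ↦ λ̄. Then F has characteristic 0. -/
open Polynomial in
/-- An algebraically closed field with a nonidentity involution has characteristic 0. -/
theorem stmt_0 (F : Type*) [Field F] [IsAlgClosed F] (σ : F ≃+* F)
    (hinv : ∀ x, σ (σ x) = x) (hne : ∃ x, σ x ≠ x) : CharZero F := by
  obtain ⟨p, hp⟩ := CharP.exists F
  rcases CharP.char_is_prime_or_zero F p with hprime | rfl
  swap
  · exact CharP.charP_to_charZero F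
  exfalso
  obtain ⟨x, hx⟩ := hne
  rcases hprime.eq_two_or_odd' with rfl | hodd
  · -- characteristic 2
    have h2 : (2 : F) = 0 := by exact_mod_cast CharP.cast_eq_zero F 2
    set c := σ x - x with hc
    have hc0 : c ≠ 0 := sub_ne_zero.mpr hx
    have hσx : σ x = x + c := by rw [hc]; ring
    set α := x / c with hα
    have hσc : σ c = c := by
      have h : σ c = x - σ x := by rw [hc, map_sub, hinv]
      rw [h, hσx]; linear_combination -c * h2
    have hσα : σ α = α + 1 := by
      rw [hα, map_div₀, hσx, hσc]
      field_simp
    set a := α ^ 2 - α with ha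
    have hσa : σ a = a := by
      rw [ha, map_sub, map_pow, hσα]; linear_combination α * h2
    -- pick β with β² - β = a * α
    obtain ⟨β, hβ⟩ : ∃ β : F, β ^ 2 - β - a * α = 0 := by
      have hd : (X ^ 2 - X - C (a * α) : F[X]).degree = 2 := by
        compute_degree!
      obtain ⟨β, hβ⟩ := IsAlgClosed.exists_root (X ^ 2 - X - C (a * α))
        (by rw [hd]; norm_num)
      refine ⟨β, ?_⟩
      simpa [Polynomial.IsRoot] using hβ
    set γ := σ β - β with hγ
    have hσβ : σ β = β + γ := by rw [hγ]; ring
    have hγeq : γ ^ 2 - γ = a := by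
      have h1 : σ β ^ 2 - σ β - σ a * σ α = 0 := by
        have h := congrArg σ hβ
        simpa [map_sub, map_mul, map_pow] using h
      rw [hσa, hσα] at h1
      rw [hγ]
      linear_combination h1 - hβ - (β * (σ β - β)) * h2
    have hδ : (γ - α) ^ 2 = γ - α := by
      rw [ha] at hγeq
      linear_combination hγeq + (α ^ 2 - γ * α) * h2
    have hδ01 : γ - α = 0 ∨ γ - α = 1 := by
      have h : (γ - α) * ((γ - α) - 1) = 0 := by linear_combination hδ
      rcases mul_eq_zero.mp h with h | h
      · exact Or.inl h
      · exact Or.inr (by linear_combination h)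
    have hσγ : σ γ = -γ := by rw [hγ, map_sub, hinv]; ring
    have hσδ : σ (γ - α) = γ - α + 1 := by
      rw [map_sub, hσγ, hσα]; linear_combination -(γ + 1) * h2
    rcases hδ01 with h | h
    · rw [h, map_zero] at hσδ
      exact one_ne_zero (by linear_combination -hσδ)
    · rw [h, map_one] at hσδ
      exact one_ne_zero (by linear_combination -hσδ)
  · -- odd characteristic
    have hp0 : (p : F) = 0 := CharP.cast_eq_zero F p
    have hpne2 : p ≠ 2 := by rintro rfl; exact (by norm_num : ¬ Odd 2) hodd
    have h2ne : (2 : F) ≠ 0 := by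
      intro h
      have hd : p ∣ 2 := (CharP.cast_eq_zero_iff F p 2).mp (by exact_mod_cast h)
      exact hpne2 ((Nat.prime_dvd_prime_iff_eq hprime Nat.prime_two).mp hd)
    have hy0 : x - σ x ≠ 0 := sub_ne_zero.mpr (Ne.symm hx)
    obtain ⟨z, hz⟩ := IsAlgClosed.exists_pow_nat_eq (x - σ x) zero_lt_two
    have hz0 : z ≠ 0 := by rintro rfl; rw [zero_pow two_ne_zero] at hz; exact hy0 hz.symm
    have hσy : σ (x - σ x) = -(x - σ x) := by rw [map_sub, hinv]; ring
    have hσz2 : (σ z) ^ 2 = -(x - σ x) := by rw [← map_pow, hz, hσy]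
    have hσz0 : σ z ≠ 0 := by
      intro h; rw [h, zero_pow two_ne_zero] at hσz2
      exact hy0 (by linear_combination hσz2)
    set i := σ z / z with hi
    have hi2 : i ^ 2 = -1 := by
      rw [hi, div_pow, hσz2, hz, neg_div, div_self hy0]
    have hi0 : i ≠ 0 := by
      intro h; rw [h, zero_pow two_ne_zero] at hi2
      exact absurd hi2.symm (by norm_num)
    have hσi : σ i = -i := by
      rw [hi, map_div₀, hinv]
      field_simp
      linear_combination hz + hσz2
    have key : ∀ a b : F, σ a = a → σ b = b → ∃ t, σ t = t ∧ t ^ 2 = a ^ 2 + b ^ 2 := by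
      intro a b hA hB
      obtain ⟨w, hw⟩ := IsAlgClosed.exists_pow_nat_eq (a + b * i) zero_lt_two
      refine ⟨w * σ w, by rw [map_mul, hinv, mul_comm], ?_⟩
      have hσw2 : (σ w) ^ 2 = a - b * i := by
        rw [← map_pow, hw, map_add, map_mul, hA, hB, hσi]; ring
      calc (w * σ w) ^ 2 = w ^ 2 * (σ w) ^ 2 := by ring
        _ = (a + b * i) * (a - b * i) := by rw [hw, hσw2]
        _ = a ^ 2 + b ^ 2 := by linear_combination (-b ^ 2) * hi2
    have sums : ∀ n : ℕ, ∃ s : F, σ s = s ∧ s ^ 2 = (n : F) := by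
      intro n; induction n with
      | zero => exact ⟨0, by simp, by simp⟩
      | succ k ih =>
        obtain ⟨s, hs1, hs2⟩ := ih
        obtain ⟨t, ht1, ht2⟩ := key s 1 hs1 (map_one σ)
        exact ⟨t, ht1, by rw [ht2, hs2]; push_cast; ring⟩
    obtain ⟨s, hs1, hs2⟩ := sums (p - 1)
    have hps : s ^ 2 = -1 := by
      rw [hs2, Nat.cast_sub hprime.one_lt.le, hp0]; push_cast; ring
    have hsplit : (s - i) * (s + i) = 0 := by linear_combination hps - hi2
    have h2i : (2 : F) * i = 0 := by
      rcases mul_eq_zero.mp hsplit with h | h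
      · have hsi : s = i := by linear_combination h
        rw [hsi, hσi] at hs1
        linear_combination -hs1
      · have hsi : s = -i := by linear_combination h
        rw [hsi, map_neg, hσi] at hs1
        linear_combination hs1
    rcases mul_eq_zero.mp h2i with h | h
    · exact h2ne h
    · exact hi0 h
end

section
/- Let F be an algebraically closed field with a nonidentity involution, and let P = {λ ∈ F : λ̄ = λ} be its fixed field. Then there exists i ∈ F with i² = -1 such that every element of F is uniquely representable in the form a + b·i with a, b ∈ P, and the involution satisfies overline(a + b·i) = a - b·i for all a, b ∈ P. -/
open Polynomial

/-- For an algebraically closed field `F` with nonidentity involution `σ` with fixed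
field `P = {x | σ x = x}`, there is `i` with `i² = -1` such that every element of `F`
is uniquely of the form `a + b*i` with `a, b ∈ P`, and `σ (a + b*i) = a - b*i`. -/
theorem stmt_1 (F : Type*) [Field F] [IsAlgClosed F] (σ : F ≃+* F)
    (hinv : ∀ x, σ (σ x) = x) (hne : ∃ x, σ x ≠ x) :
    ∃ i : F, i ^ 2 = -1 ∧
      (∀ z : F, ∃! p : F × F, (σ p.1 = p.1 ∧ σ p.2 = p.2) ∧ z = p.1 + p.2 * i) ∧
      (∀ a b : F, σ a = a → σ b = b → σ (a + b * i) = a - b * i) := by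
  obtain ⟨c, hc⟩ := hne
  -- First: the characteristic is not 2 (Artin–Schreier style argument).
  have h2 : (2 : F) ≠ 0 := by
    intro h2
    obtain ⟨e, he_def⟩ : ∃ e : F, e = c + σ c := ⟨_, rfl⟩
    have he : σ e = e := by rw [he_def, map_add, hinv]; ring
    have he0 : e ≠ 0 := by
      intro h0
      apply hc
      have hσc : σ c = -c := by rw [he_def] at h0; linear_combination h0
      rw [hσc]
      linear_combination -c * h2
    obtain ⟨α, hα_def⟩ : ∃ α : F, α = c / e := ⟨_, rfl⟩
    have hσα : σ α = α + 1 := by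
      have h1 : σ α = σ c / e := by rw [hα_def, map_div₀, he]
      have hσc : σ c = e - c := by rw [he_def]; ring
      rw [h1, hσc, sub_div, div_self he0, hα_def]
      linear_combination (-c / e) * h2
    obtain ⟨a, ha_def⟩ : ∃ a : F, a = α ^ 2 + α := ⟨_, rfl⟩
    have hσa : σ a = a := by
      rw [ha_def, map_add, map_pow, hσα]
      linear_combination (α + 1) * h2
    obtain ⟨β, hβ⟩ := IsAlgClosed.exists_root (X ^ 2 + X + C (a * α) : F[X]) (by
      have hd : (X ^ 2 + X + C (a * α) : F[X]).degree = 2 := by compute_degree!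
      rw [hd]; exact two_ne_zero)
    have hβ' : β ^ 2 + β + a * α = 0 := by
      simpa using hβ
    obtain ⟨t, ht_def⟩ : ∃ t : F, t = β + σ β := ⟨_, rfl⟩
    have hσβ : σ β = t - β := by rw [ht_def]; ring
    have hσt : σ t = t := by rw [ht_def, map_add, hinv]; ring
    obtain ⟨s, hs_def⟩ : ∃ s : F, s = β - t * α := ⟨_, rfl⟩
    have hσs : σ s = s := by
      rw [hs_def, map_sub, map_mul, hσt, hσα, hσβ]
      linear_combination -β * h2
    have hβs : β = s + t * α := by rw [hs_def]; ring
    have hα2 : α ^ 2 = a - α := by rw [ha_def]; ring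
    rw [hβs] at hβ'
    -- key identity : x + y * α = 0 with x, y fixed
    have key : (s ^ 2 + s + t ^ 2 * a) + (a - t ^ 2 - t + 2 * s * t) * α = 0 := by
      linear_combination hβ' + t ^ 2 * hα2 + (-(t*α) + t^2*a - t^2*α - t^2*α^2) * h2
    have hxσ : σ (s ^ 2 + s + t ^ 2 * a) = s ^ 2 + s + t ^ 2 * a := by
      rw [map_add, map_add, map_pow, map_mul, map_pow, hσs, hσt, hσa]
    have hyσ : σ (a - t ^ 2 - t + 2 * s * t) = a - t ^ 2 - t + 2 * s * t := by
      rw [map_add, map_sub, map_sub, map_pow, map_mul, map_mul, map_ofNat, hσs, hσt, hσa]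
    have hone : (1 : F) ≠ 0 := one_ne_zero
    have hy : a - t ^ 2 - t + 2 * s * t = 0 := by
      by_contra hy0
      have hαval : (a - t ^ 2 - t + 2 * s * t) * α = -(s ^ 2 + s + t ^ 2 * a) := by
        linear_combination key
      have h1 : (a - t ^ 2 - t + 2 * s * t) * σ α = -(s ^ 2 + s + t ^ 2 * a) := by
        have := congrArg σ hαval
        rwa [map_mul, map_neg, hyσ, hxσ] at this
      have hσαα : σ α = α := mul_left_cancel₀ hy0 (h1.trans hαval.symm)
      exact hone (by linear_combination hσαα - hσα)
    -- so t² + t = a (using char 2), hence α = t or α = -t-1, both fixed: contradiction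
    have hprod : (α - t) * (α + t + 1) = 0 := by
      linear_combination hy - s * t * h2 - ha_def
    rcases mul_eq_zero.mp hprod with h | h
    · have hαt : α = t := by linear_combination h
      have hfix : σ α = α := by rw [hαt, hσt]
      exact hone (by linear_combination hfix - hσα)
    · have hαt : α = -t - 1 := by linear_combination h
      have hfix : σ α = α := by rw [hαt, map_sub, map_neg, hσt, map_one]
      exact hone (by linear_combination hfix - hσα)
  -- Main construction.
  obtain ⟨u, hu_def⟩ : ∃ u : F, u = c - σ c := ⟨_, rfl⟩
  have hσu : σ u = -u := by rw [hu_def, map_sub, hinv]; ring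
  have hu0 : u ≠ 0 := by rw [hu_def]; exact sub_ne_zero.mpr (Ne.symm hc)
  obtain ⟨s, hs⟩ := IsAlgClosed.exists_pow_nat_eq u (n := 2) (by norm_num)
  obtain ⟨p, hp_def⟩ : ∃ p : F, p = (s + σ s) / 2 := ⟨_, rfl⟩
  obtain ⟨q, hq_def⟩ : ∃ q : F, q = (s - σ s) / (2 * u) := ⟨_, rfl⟩
  have hσp : σ p = p := by
    rw [hp_def, map_div₀, map_add, hinv, map_ofNat, add_comm]
  have hσq : σ q = q := by
    rw [hq_def, map_div₀, map_sub, hinv, map_mul, map_ofNat, hσu, mul_neg, div_neg,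
      ← neg_div, neg_sub]
  have hs_eq : s = p + q * u := by
    rw [hp_def, hq_def]
    field_simp
    ring
  have hσs_eq : σ s = p - q * u := by
    rw [hs_eq, map_add, map_mul, hσp, hσq, hσu]
    ring
  have h1 : (p + q * u) ^ 2 = u := by rw [← hs_eq]; exact hs
  have h1' : (p - q * u) ^ 2 = -u := by
    rw [← hσs_eq, ← map_pow, hs, hσu]
  have hA2 : (2 : F) * (p ^ 2 + q ^ 2 * u ^ 2) = 0 := by linear_combination h1 + h1'
  have hA : p ^ 2 + q ^ 2 * u ^ 2 = 0 := (mul_eq_zero.mp hA2).resolve_left h2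
  have hB2 : (2 : F) * (2 * p * q * u) = 2 * u := by linear_combination h1 - h1'
  have hpq : 2 * p * q * u = u := mul_left_cancel₀ h2 hB2
  have hpq' : (2 * p * q) * u = 1 * u := by linear_combination hpq
  have hpq1 : 2 * p * q = 1 := mul_right_cancel₀ hu0 hpq'
  have hp0 : p ≠ 0 := by
    intro h
    rw [h] at hpq1
    simp at hpq1
  obtain ⟨i, hi_def⟩ : ∃ i : F, i = (q / p) * u := ⟨_, rfl⟩
  have hσi : σ i = -i := by
    rw [hi_def, map_mul, map_div₀, hσq, hσp, hσu]
    ring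
  have hi2 : i ^ 2 = -1 := by
    rw [hi_def]
    field_simp
    linear_combination hA
  have hi0 : i ≠ 0 := by
    intro h
    rw [h] at hi2
    exact one_ne_zero (by linear_combination hi2)
  have h2i : 2 * i ≠ 0 := mul_ne_zero h2 hi0
  refine ⟨i, hi2, ?_, ?_⟩
  · intro z
    refine ⟨((z + σ z) / 2, (z - σ z) / (2 * i)), ⟨⟨?_, ?_⟩, ?_⟩, ?_⟩
    · rw [map_div₀, map_add, hinv, map_ofNat, add_comm]
    · rw [map_div₀, map_sub, hinv, map_mul, map_ofNat, hσi, mul_neg, div_neg,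
        ← neg_div, neg_sub]
    · field_simp
      ring
    · rintro ⟨a', b'⟩ ⟨⟨ha', hb'⟩, hz⟩
      simp only at ha' hb' hz
      have hσz : σ z = a' - b' * i := by
        rw [hz, map_add, map_mul, ha', hb', hσi]
        ring
      have hfst : a' = (z + σ z) / 2 := by
        rw [eq_div_iff h2, hσz, hz]; ring
      have hsnd : b' = (z - σ z) / (2 * i) := by
        rw [eq_div_iff h2i, hσz, hz]; ring
      exact Prod.ext hfst hsnd
  · intro a b ha hb
    rw [map_add, map_mul, ha, hb, hσi]
    ring
end

section
/- Let F be an algebraically closed field of characteristic different from 2, and let M be a nonsingular n×n matrix over F. Then there exists a polynomial f ∈ F[x] such that f(M)² = M. -/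
/-!
Write `p` for the characteristic polynomial of `M`; its roots are the eigenvalues, all nonzero.
Interpolating square roots of the eigenvalues gives `g` with `g(λ)² = λ` at every root `λ` of `p`,
so `g² - X` vanishes at every root of `p` and hence is nilpotent modulo `p`. In `F[X]/(p)`,
where `2` and `X` are units, Newton's iteration for `Y² - X` started at `g` converges after
finitely many steps to an exact square root `f` of `X`. Thus `p ∣ f² - X`, and Cayley–Hamilton
gives `f(M)² = M`.
-/

open Polynomial

theorem exists_pow_eq_of_isNilpotent_pow_sub {S : Type*} [CommRing S] {k : ℕ}
    (hk : IsUnit (k : S)) {u b : S} (hu : IsUnit u) (hb : IsNilpotent (b ^ k - u)) :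
    ∃ c : S, c ^ k = u := by
  have hbk : IsUnit (b ^ k) := by
    simpa using hb.isUnit_add_left_of_commute hu (Commute.all _ _)
  have hderiv : IsUnit (aeval b (derivative (X ^ k - C u))) := by
    rw [derivative_sub, derivative_C, sub_zero, derivative_X_pow, map_mul, map_pow, aeval_X]
    simp only [map_natCast]
    rcases k.eq_zero_or_pos with rfl | hk0
    · simpa using hk
    · exact hk.mul (((isUnit_pow_iff hk0.ne').mp hbk).pow (k - 1))
  obtain ⟨c, -, hc⟩ :=
    (existsUnique_nilpotent_sub_and_aeval_eq_zero (by simpa using hb) hderiv).exists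
  exact ⟨c, by simpa [sub_eq_zero] using hc⟩

theorem Polynomial.Splits.dvd_pow_natDegree_of_forall_isRoot {K : Type*} [Field K] {p q : K[X]}
    (hp : p.Splits) (hp0 : p ≠ 0) (hq : ∀ a ∈ p.roots, q.IsRoot a) :
    p ∣ q ^ p.natDegree := by
  conv_lhs => rw [hp.eq_prod_roots]
  rw [C_mul_dvd (leadingCoeff_ne_zero.mpr hp0)]
  calc (p.roots.map fun a => X - C a).prod
      ∣ (p.roots.map fun _ => q).prod :=
        Multiset.prod_dvd_prod_of_dvd _ _ fun a ha => dvd_iff_isRoot.mpr (hq a ha)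
    _ = q ^ p.natDegree := by
        rw [Multiset.map_const', Multiset.prod_replicate, hp.natDegree_eq_card_roots]

theorem AdjoinRoot.isUnit_mk_of_isCoprime {R : Type*} [CommRing R] {f g : R[X]}
    (h : IsCoprime g f) : IsUnit (mk f g) := by
  obtain ⟨a, b, hab⟩ := h
  refine IsUnit.of_mul_eq_one (mk f a) ?_
  simpa [mul_comm] using congrArg (mk f) hab

theorem AdjoinRoot.isUnit_root_of_coeff_zero_ne_zero {K : Type*} [Field K] {p : K[X]}
    (hp : p.coeff 0 ≠ 0) : IsUnit (root p) :=
  isUnit_mk_of_isCoprime <| irreducible_X.coprime_iff_not_dvd.mpr (mt X_dvd_iff.mp hp)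

theorem Polynomial.exists_dvd_pow_sub_X {K : Type*} [Field K] [IsAlgClosed K] {k : ℕ}
    (hk : (k : K) ≠ 0) {p : K[X]} (hp : p.coeff 0 ≠ 0) : ∃ f : K[X], p ∣ f ^ k - X := by
  classical
  have hp0 : p ≠ 0 := by rintro rfl; exact hp (coeff_zero 0)
  have hk0 : 0 < k := Nat.pos_of_ne_zero (by rintro rfl; exact hk Nat.cast_zero)
  choose r hr using fun a : K => IsAlgClosed.exists_pow_nat_eq a hk0
  set g := Lagrange.interpolate p.roots.toFinset id r
  have hg : p ∣ (g ^ k - X) ^ p.natDegree :=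
    (IsAlgClosed.splits p).dvd_pow_natDegree_of_forall_isRoot hp0 fun a ha => by
      have hga : g.eval a = r a :=
        Lagrange.eval_interpolate_at_node r (Set.injOn_id _) (Multiset.mem_toFinset.mpr ha)
      simp [hga, hr]
  have hkS : IsUnit (k : AdjoinRoot p) := by
    simpa using hk.isUnit.map (algebraMap K (AdjoinRoot p))
  have hgS : IsNilpotent (AdjoinRoot.mk p g ^ k - AdjoinRoot.root p) :=
    ⟨p.natDegree, by
      rwa [← AdjoinRoot.mk_X, ← map_pow, ← map_sub, ← map_pow, AdjoinRoot.mk_eq_zero]⟩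
  obtain ⟨c, hc⟩ := exists_pow_eq_of_isNilpotent_pow_sub hkS
    (AdjoinRoot.isUnit_root_of_coeff_zero_ne_zero hp) hgS
  obtain ⟨f, rfl⟩ := AdjoinRoot.mk_surjective c
  exact ⟨f, by rwa [← AdjoinRoot.mk_eq_zero, map_sub, map_pow, AdjoinRoot.mk_X, sub_eq_zero]⟩

theorem exists_aeval_pow_eq_of_aeval_eq_zero {K A : Type*} [Field K] [IsAlgClosed K] [Ring A]
    [Algebra K A] {k : ℕ} (hk : (k : K) ≠ 0) {a : A} {p : K[X]} (hp : p.coeff 0 ≠ 0)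
    (hpa : aeval a p = 0) : ∃ f : K[X], aeval a f ^ k = a := by
  obtain ⟨f, q, hfq⟩ := exists_dvd_pow_sub_X hk hp
  refine ⟨f, ?_⟩
  simpa [hpa, sub_eq_zero] using congrArg (aeval a) hfq

/-- Over an algebraically closed field of characteristic different from 2, every
nonsingular matrix `M` has a polynomial square root: `f(M)² = M` for some `f ∈ F[x]`. -/
theorem stmt_4 (F : Type*) [Field F] [IsAlgClosed F] (hchar : ringChar F ≠ 2)
    (n : ℕ) (M : Matrix (Fin n) (Fin n) F) (hM : IsUnit M) :
    ∃ f : Polynomial F, (Polynomial.aeval M f) ^ 2 = M := by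
  have hcoeff : M.charpoly.coeff 0 ≠ 0 := by
    simpa [M.det_eq_sign_charpoly_coeff] using (M.isUnit_iff_isUnit_det.mp hM).ne_zero
  exact exists_aeval_pow_eq_of_aeval_eq_zero (by exact_mod_cast Ring.two_ne_zero hchar) hcoeff
    M.aeval_self_charpoly
end

section
/- Over any field F, every pair (A, B) of n×n matrices, both of the tridiagonal form with diagonal (ε, 0, 0, …, 0), superdiagonal (a₁, b₁, a₂, b₂, …), and subdiagonal (a₁', b₁', a₂', b₂', …), is equivalent (via simultaneous row and column permutations, the column permutation being the reverse of the row permutation) to the pair (P(A), P(B)), where P(A) is: for n = 2k+1, the upper bidiagonal matrix with diagonal (b_k, …, b₁, ε, b₁', …, b_k') and superdiagonal (a_k', …, a₁', a₁, …, a_k); and for n = 2k, the upper bidiagonal matrix with diagonal (a_k, …, a₁, a₁', …, a_k') and superdiagonal (b_{k-1}', …, b₁', ε, b₁, …, b_{k-1}). In particular there exist permutation matrices Q, R (independent of the entries) with Q·A·R = P(A) and Q·B·R = P(B). -/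
open Matrix



def rhoOdd (k : ℕ) : Equiv.Perm (Fin (2 * k + 1)) where
  toFun i := ⟨if (i : ℕ) < k then 2 * k - 1 - 2 * i else 2 * ((i : ℕ) - k),
    by have := i.isLt; split_ifs <;> omega⟩
  invFun r := ⟨if (r : ℕ) % 2 = 0 then (r : ℕ) / 2 + k else k - 1 - (r : ℕ) / 2,
    by have := r.isLt; split_ifs <;> omega⟩
  left_inv i := by have := i.isLt; ext; simp only [Fin.ext_iff]; split_ifs <;> omega
  right_inv r := by have := r.isLt; ext; simp only [Fin.ext_iff]; split_ifs <;> omega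

def gammaOdd (k : ℕ) : Equiv.Perm (Fin (2 * k + 1)) where
  toFun c := ⟨if (c : ℕ) % 2 = 0 then k - (c : ℕ) / 2 else (c : ℕ) / 2 + 1 + k,
    by have := c.isLt; split_ifs <;> omega⟩
  invFun j := ⟨if (j : ℕ) ≤ k then 2 * k - 2 * j else 2 * ((j : ℕ) - k) - 1,
    by have := j.isLt; split_ifs <;> omega⟩
  left_inv c := by have := c.isLt; ext; simp only [Fin.ext_iff]; split_ifs <;> omega
  right_inv j := by have := j.isLt; ext; simp only [Fin.ext_iff]; split_ifs <;> omega

def rhoEven (k : ℕ) : Equiv.Perm (Fin (2 * k)) where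
  toFun i := ⟨if (i : ℕ) < k then 2 * k - 2 - 2 * i else 2 * ((i : ℕ) - k) + 1,
    by have := i.isLt; split_ifs <;> omega⟩
  invFun r := ⟨if (r : ℕ) % 2 = 0 then k - 1 - (r : ℕ) / 2 else (r : ℕ) / 2 + k,
    by have := r.isLt; split_ifs <;> omega⟩
  left_inv i := by have := i.isLt; ext; simp only [Fin.ext_iff]; split_ifs <;> omega
  right_inv r := by have := r.isLt; ext; simp only [Fin.ext_iff]; split_ifs <;> omega

def gammaEven (k : ℕ) : Equiv.Perm (Fin (2 * k)) where
  toFun c := ⟨if (c : ℕ) % 2 = 0 then (c : ℕ) / 2 + k else k - 1 - (c : ℕ) / 2,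
    by have := c.isLt; split_ifs <;> omega⟩
  invFun j := ⟨if (j : ℕ) < k then 2 * k - 1 - 2 * j else 2 * ((j : ℕ) - k),
    by have := j.isLt; split_ifs <;> omega⟩
  left_inv c := by have := c.isLt; ext; simp only [Fin.ext_iff]; split_ifs <;> omega
  right_inv j := by have := j.isLt; ext; simp only [Fin.ext_iff]; split_ifs <;> omega

/-- The tridiagonal matrix with diagonal `(ε, 0, 0, …)`, superdiagonal
`(a₀, b₀, a₁, b₁, …)` and subdiagonal `(a'₀, b'₀, a'₁, b'₁, …)`. -/
def tridMat (F : Type*) [Field F] (n : ℕ) (ε : F) (a a' b b' : ℕ → F) :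
    Matrix (Fin n) (Fin n) F :=
  Matrix.of fun i j =>
    if (i : ℕ) = j then (if (i : ℕ) = 0 then ε else 0)
    else if (j : ℕ) = (i : ℕ) + 1 then
      (if (i : ℕ) % 2 = 0 then a ((i : ℕ) / 2) else b ((i : ℕ) / 2))
    else if (i : ℕ) = (j : ℕ) + 1 then
      (if (j : ℕ) % 2 = 0 then a' ((j : ℕ) / 2) else b' ((j : ℕ) / 2))
    else 0

/-- `𝒫(A)` for odd size `n = 2k+1`: upper bidiagonal with diagonal
`(b_k, …, b₁, ε, b'₁, …, b'_k)` and superdiagonal `(a'_k, …, a'₁, a₁, …, a_k)`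
(here `a 0 = a₁`, etc.). -/
def PmatOdd (F : Type*) [Field F] (k : ℕ) (ε : F) (a a' b b' : ℕ → F) :
    Matrix (Fin (2 * k + 1)) (Fin (2 * k + 1)) F :=
  Matrix.of fun i j =>
    if (i : ℕ) = j then
      (if (i : ℕ) < k then b (k - 1 - (i : ℕ))
       else if (i : ℕ) = k then ε else b' ((i : ℕ) - k - 1))
    else if (j : ℕ) = (i : ℕ) + 1 then
      (if (i : ℕ) < k then a' (k - 1 - (i : ℕ)) else a ((i : ℕ) - k))
    else 0

/-- `𝒫(A)` for even size `n = 2k`: upper bidiagonal with diagonal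
`(a_k, …, a₁, a'₁, …, a'_k)` and superdiagonal `(b'_{k-1}, …, b'₁, ε, b₁, …, b_{k-1})`. -/
def PmatEven (F : Type*) [Field F] (k : ℕ) (ε : F) (a a' b b' : ℕ → F) :
    Matrix (Fin (2 * k)) (Fin (2 * k)) F :=
  Matrix.of fun i j =>
    if (i : ℕ) = j then
      (if (i : ℕ) < k then a (k - 1 - (i : ℕ)) else a' ((i : ℕ) - k))
    else if (j : ℕ) = (i : ℕ) + 1 then
      (if (i : ℕ) + 1 < k then b' (k - 2 - (i : ℕ))
       else if (i : ℕ) + 1 = k then ε else b ((i : ℕ) - k))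
    else 0

set_option maxHeartbeats 1000000 in
/-- Every pair of tridiagonal matrices of the shape `tridMat` is simultaneously
transformed, by fixed row and column permutations independent of the entries,
into the pair of upper-bidiagonal matrices `(𝒫(A), 𝒫(B))`, for both parities of
the size. -/
theorem stmt_6 (F : Type*) [Field F] (k : ℕ) :
    (∃ ρ γ : Equiv.Perm (Fin (2 * k + 1)), ∀ (ε : F) (a a' b b' : ℕ → F),
      (ρ.permMatrix F) * tridMat F (2 * k + 1) ε a a' b b' * (γ.permMatrix F) =
        PmatOdd F k ε a a' b b') ∧
    (∃ ρ γ : Equiv.Perm (Fin (2 * k)), ∀ (ε : F) (a a' b b' : ℕ → F),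
      (ρ.permMatrix F) * tridMat F (2 * k) ε a a' b b' * (γ.permMatrix F) =
        PmatEven F k ε a a' b b') := by
  constructor
  · refine ⟨rhoOdd k, gammaOdd k, fun ε a a' b b' => ?_⟩
    rw [Equiv.Perm.permMatrix, Equiv.Perm.permMatrix, PEquiv.toMatrix_toPEquiv_mul,
      PEquiv.mul_toMatrix_toPEquiv, Matrix.submatrix_submatrix]
    ext i j
    have hi := i.isLt; have hj := j.isLt
    simp only [Matrix.submatrix_apply, tridMat, PmatOdd, rhoOdd, gammaOdd,
      Equiv.coe_fn_symm_mk, Equiv.coe_fn_mk, Matrix.of_apply, Function.comp, id_eq]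
    split_ifs <;> first | rfl | (exfalso; omega) | (congr 1; omega) | (exfalso; assumption)
  · refine ⟨rhoEven k, gammaEven k, fun ε a a' b b' => ?_⟩
    rw [Equiv.Perm.permMatrix, Equiv.Perm.permMatrix, PEquiv.toMatrix_toPEquiv_mul,
      PEquiv.mul_toMatrix_toPEquiv, Matrix.submatrix_submatrix]
    ext i j
    have hi := i.isLt; have hj := j.isLt
    simp only [Matrix.submatrix_apply, tridMat, PmatEven, rhoEven, gammaEven,
      Equiv.coe_fn_symm_mk, Equiv.coe_fn_mk, Matrix.of_apply, Function.comp, id_eq]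
    split_ifs <;> first | rfl | (exfalso; omega) | (congr 1; omega) | (exfalso; assumption)
end

section
/- Let F be a field, σ, τ ∈ {+1, -1}, and k a positive integer. Define M^σ_k as the 2k×2k block-diagonal matrix with k diagonal blocks [[0,1],[σ,0]]. Then the pair of (2k+1)×(2k+1) matrices (0₁ ⊕ M^σ_k, M^τ_k ⊕ 0₁) is equivalent to (F_k, G_k) ⊕ (F_kᵀ, G_kᵀ), where F_k = [I_k | 0] and G_k = [0 | I_k] are the k×(k+1) matrices with identity in the first (resp. last) k columns. -/
/-!
The nonzero entries of both matrices on the left sit at the positions `(p, p ± 1)`. Read as a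
bipartite graph between rows and columns they form two paths, the odd rows with the even columns
(`k` rows, `k + 1` columns) and the even rows with the odd columns (`k + 1` rows, `k` columns), and
along each path the edges alternate between the two matrices. Listing the rows and columns in path
order turns the pair into the blocks `(F_k, G_k)` and `(F_kᵀ, G_kᵀ)` up to the signs `σ, τ`, and
since `σ² = τ² = 1` these are removed by scaling rows and columns by alternating factors from
`{1, σ, τ}`. So both transforming matrices are monomial.
-/

open Matrix

/-- Equivalence of pairs of square matrices: `(A,B) ≈ (A',B')` iff there are
nonsingular `R`, `S` with `R*A*S = A'` and `R*B*S = B'`. -/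
def PairEquiv {F : Type*} [Field F] {n : ℕ} (A B A' B' : Matrix (Fin n) (Fin n) F) : Prop :=
  ∃ R S : Matrix (Fin n) (Fin n) F, IsUnit R ∧ IsUnit S ∧ R * A * S = A' ∧ R * B * S = B'

theorem Matrix.isUnit_permMatrix {n R : Type*} [DecidableEq n] [Fintype n] [CommRing R]
    (σ : Equiv.Perm n) : IsUnit (σ.permMatrix R) := by
  simpa using (Group.isUnit σ⁻¹).map (permMatrixHom (n := n) (R := R))

theorem PairEquiv.of_injective_of_ne_zero {F : Type*} [Field F] {n : ℕ}
    {A B A' B' : Matrix (Fin n) (Fin n) F} {ρ σ : Fin n → Fin n} (hρ : ρ.Injective)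
    (hσ : σ.Injective) {r c : Fin n → F} (hr : ∀ i, r i ≠ 0) (hc : ∀ j, c j ≠ 0)
    (hA : ∀ i j, r i * A (ρ i) (σ j) * c j = A' i j)
    (hB : ∀ i j, r i * B (ρ i) (σ j) * c j = B' i j) : PairEquiv A B A' B' := by
  set ρ' : Equiv.Perm (Fin n) := Equiv.ofBijective ρ hρ.bijective_of_finite
  set σ' : Equiv.Perm (Fin n) := Equiv.ofBijective σ hσ.bijective_of_finite
  have hscale : ∀ M : Matrix (Fin n) (Fin n) F,
      diagonal r * ρ'.permMatrix F * M * ((σ'⁻¹).permMatrix F * diagonal c) =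
        of fun i j => r i * M (ρ i) (σ j) * c j := by
    intro M
    rw [Matrix.mul_assoc (diagonal r), PEquiv.toMatrix_toPEquiv_mul, ← Matrix.mul_assoc,
      PEquiv.mul_toMatrix_toPEquiv]
    ext i j
    simp [ρ', σ', Equiv.Perm.inv_def, diagonal_mul, mul_diagonal]
  refine ⟨_, _, ?_, ?_, (hscale A).trans (ext hA), (hscale B).trans (ext hB)⟩
  · exact (isUnit_diagonal.mpr (Pi.isUnit_iff.mpr fun i => (hr i).isUnit)).mul
      (isUnit_permMatrix ρ')
  · exact (isUnit_permMatrix σ'⁻¹).mul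
      (isUnit_diagonal.mpr (Pi.isUnit_iff.mpr fun j => (hc j).isUnit))

namespace KroneckerPencil

variable {F : Type*} [Field F] (k : ℕ)

def zeroOplusM (s : F) : Matrix (Fin (2 * k + 1)) (Fin (2 * k + 1)) F :=
  of fun i j =>
    if (j : ℕ) = (i : ℕ) + 1 ∧ (i : ℕ) % 2 = 1 then 1
    else if (i : ℕ) = (j : ℕ) + 1 ∧ (j : ℕ) % 2 = 1 then s else 0

def mOplusZero (t : F) : Matrix (Fin (2 * k + 1)) (Fin (2 * k + 1)) F :=
  of fun i j =>
    if (j : ℕ) = (i : ℕ) + 1 ∧ (i : ℕ) % 2 = 0 then 1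
    else if (i : ℕ) = (j : ℕ) + 1 ∧ (j : ℕ) % 2 = 0 then t else 0

def fOplusFT : Matrix (Fin (2 * k + 1)) (Fin (2 * k + 1)) F :=
  of fun i j =>
    if ((i : ℕ) = j ∧ (i : ℕ) < k) ∨ ((j : ℕ) = (i : ℕ) + 1 ∧ k ≤ (i : ℕ)) then 1 else 0

def gOplusGT : Matrix (Fin (2 * k + 1)) (Fin (2 * k + 1)) F :=
  of fun i j =>
    if ((j : ℕ) = (i : ℕ) + 1 ∧ (i : ℕ) < k) ∨ ((i : ℕ) = j ∧ k + 1 ≤ (j : ℕ)) then 1 else 0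

def sourceRow (i : Fin (2 * k + 1)) : Fin (2 * k + 1) :=
  ⟨if (i : ℕ) < k then 2 * k - 1 - 2 * i else 4 * k - 2 * i, by split <;> omega⟩

def sourceCol (j : Fin (2 * k + 1)) : Fin (2 * k + 1) :=
  ⟨if (j : ℕ) ≤ k then 2 * k - 2 * j else 4 * k + 1 - 2 * j, by split <;> omega⟩

def rowScale (s t : F) (i : Fin (2 * k + 1)) : F :=
  if (i : ℕ) < k then (if (i : ℕ) % 2 = 0 then 1 else t)
  else (if ((i : ℕ) - k) % 2 = 0 then s else 1)

def colScale (s t : F) (j : Fin (2 * k + 1)) : F :=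
  if (j : ℕ) ≤ k then (if (j : ℕ) % 2 = 0 then 1 else t)
  else (if ((j : ℕ) - k - 1) % 2 = 0 then 1 else s)

theorem sourceRow_injective : (sourceRow k).Injective := by
  intro a b h
  have := congrArg Fin.val h
  simp only [sourceRow] at this
  ext
  split_ifs at this <;> omega

theorem sourceCol_injective : (sourceCol k).Injective := by
  intro a b h
  have := congrArg Fin.val h
  simp only [sourceCol] at this
  ext
  split_ifs at this <;> omega

variable {k} {s t : F}

theorem rowScale_mul_self (hs : s * s = 1) (ht : t * t = 1) (i : Fin (2 * k + 1)) :
    rowScale k s t i * rowScale k s t i = 1 := by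
  unfold rowScale
  split_ifs <;> simp [hs, ht]

theorem colScale_mul_self (hs : s * s = 1) (ht : t * t = 1) (j : Fin (2 * k + 1)) :
    colScale k s t j * colScale k s t j = 1 := by
  unfold colScale
  split_ifs <;> simp [hs, ht]

theorem rowScale_mul_zeroOplusM_mul_colScale (hs : s * s = 1) (ht : t * t = 1)
    (i j : Fin (2 * k + 1)) :
    rowScale k s t i * zeroOplusM k s (sourceRow k i) (sourceCol k j) * colScale k s t j =
      fOplusFT k i j := by
  obtain ⟨i, hi⟩ := i
  obtain ⟨j, hj⟩ := j
  simp only [rowScale, colScale, zeroOplusM, fOplusFT, sourceRow, sourceCol, of_apply]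
  split_ifs <;> first | omega | linear_combination hs | linear_combination ht | ring

theorem rowScale_mul_mOplusZero_mul_colScale (hs : s * s = 1) (ht : t * t = 1)
    (i j : Fin (2 * k + 1)) :
    rowScale k s t i * mOplusZero k t (sourceRow k i) (sourceCol k j) * colScale k s t j =
      gOplusGT k i j := by
  obtain ⟨i, hi⟩ := i
  obtain ⟨j, hj⟩ := j
  simp only [rowScale, colScale, mOplusZero, gOplusGT, sourceRow, sourceCol, of_apply]
  split_ifs <;> first | omega | linear_combination hs | linear_combination ht | ring

end KroneckerPencil

theorem stmt_7_general (F : Type*) [Field F] (k : ℕ)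
    (s t : F) (hs : s = 1 ∨ s = -1) (ht : t = 1 ∨ t = -1) :
    PairEquiv
      -- 0₁ ⊕ M^σ_k
      (Matrix.of fun i j : Fin (2 * k + 1) =>
        if (j : ℕ) = (i : ℕ) + 1 ∧ (i : ℕ) % 2 = 1 then (1 : F)
        else if (i : ℕ) = (j : ℕ) + 1 ∧ (j : ℕ) % 2 = 1 then s else 0)
      -- M^τ_k ⊕ 0₁
      (Matrix.of fun i j : Fin (2 * k + 1) =>
        if (j : ℕ) = (i : ℕ) + 1 ∧ (i : ℕ) % 2 = 0 then (1 : F)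
        else if (i : ℕ) = (j : ℕ) + 1 ∧ (j : ℕ) % 2 = 0 then t else 0)
      -- F_k ⊕ F_kᵀ
      (Matrix.of fun i j : Fin (2 * k + 1) =>
        if ((i : ℕ) = j ∧ (i : ℕ) < k) ∨ ((j : ℕ) = (i : ℕ) + 1 ∧ k ≤ (i : ℕ)) then (1 : F)
        else 0)
      -- G_k ⊕ G_kᵀ
      (Matrix.of fun i j : Fin (2 * k + 1) =>
        if ((j : ℕ) = (i : ℕ) + 1 ∧ (i : ℕ) < k) ∨ ((i : ℕ) = j ∧ k + 1 ≤ (j : ℕ)) then (1 : F)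
        else 0) := by
  have hs2 : s * s = 1 := by rcases hs with rfl | rfl <;> norm_num
  have ht2 : t * t = 1 := by rcases ht with rfl | rfl <;> norm_num
  open KroneckerPencil in
  exact PairEquiv.of_injective_of_ne_zero (sourceRow_injective k) (sourceCol_injective k)
    (fun i => left_ne_zero_of_mul_eq_one (rowScale_mul_self hs2 ht2 i))
    (fun j => left_ne_zero_of_mul_eq_one (colScale_mul_self hs2 ht2 j))
    (rowScale_mul_zeroOplusM_mul_colScale hs2 ht2) (rowScale_mul_mOplusZero_mul_colScale hs2 ht2)

/-- `(0₁ ⊕ M^σ_k, M^τ_k ⊕ 0₁) ≈ (F_k, G_k) ⊕ (F_kᵀ, G_kᵀ)`, where `M^σ_k` is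
block-diagonal with `k` blocks `[[0,1],[σ,0]]` and `F_k = [I_k | 0]`,
`G_k = [0 | I_k]` are `k × (k+1)`; all matrices are written as
`(2k+1) × (2k+1)` matrices via their entries. -/
theorem stmt_7 (F : Type*) [Field F] (k : ℕ) (hk : 0 < k)
    (s t : F) (hs : s = 1 ∨ s = -1) (ht : t = 1 ∨ t = -1) :
    PairEquiv
      -- 0₁ ⊕ M^σ_k
      (Matrix.of fun i j : Fin (2 * k + 1) =>
        if (j : ℕ) = (i : ℕ) + 1 ∧ (i : ℕ) % 2 = 1 then (1 : F)
        else if (i : ℕ) = (j : ℕ) + 1 ∧ (j : ℕ) % 2 = 1 then s else 0)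
      -- M^τ_k ⊕ 0₁
      (Matrix.of fun i j : Fin (2 * k + 1) =>
        if (j : ℕ) = (i : ℕ) + 1 ∧ (i : ℕ) % 2 = 0 then (1 : F)
        else if (i : ℕ) = (j : ℕ) + 1 ∧ (j : ℕ) % 2 = 0 then t else 0)
      -- F_k ⊕ F_kᵀ
      (Matrix.of fun i j : Fin (2 * k + 1) =>
        if ((i : ℕ) = j ∧ (i : ℕ) < k) ∨ ((j : ℕ) = (i : ℕ) + 1 ∧ k ≤ (i : ℕ)) then (1 : F)
        else 0)
      -- G_k ⊕ G_kᵀ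
      (Matrix.of fun i j : Fin (2 * k + 1) =>
        if ((j : ℕ) = (i : ℕ) + 1 ∧ (i : ℕ) < k) ∨ ((i : ℕ) = j ∧ k + 1 ≤ (j : ℕ)) then (1 : F)
        else 0) :=
  stmt_7_general F k s t hs ht
end

section
/- Let F be a field, σ, τ ∈ {+1, -1}, and k a positive integer. With M^σ_k the 2k×2k block-diagonal matrix with k blocks [[0,1],[σ,0]], the pair of 2k×2k matrices (0₁ ⊕ M^σ_{k-1} ⊕ 0₁, M^τ_k) is equivalent to (J_k(0), I_k) ⊕ (J_k(0), I_k), and the pair (I₁ ⊕ M^σ_{k-1} ⊕ 0₁, M^τ_k) is equivalent to (J_{2k}(0), I_{2k}). -/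
open Matrix

/-- The `n×n` nilpotent Jordan block `J_n(0)`. -/
def Jnil (F : Type*) [Field F] (n : ℕ) : Matrix (Fin n) (Fin n) F :=
  Matrix.of fun i j => if (j : ℕ) = (i : ℕ) + 1 then (1 : F) else 0

/-!
Row `i` of each matrix below is supported in columns `i - 1` and `i + 1`, so the bipartite graph
of nonzero entries (rows against columns) is a union of paths: two paths in the first pair, and a
single one in the second, where the corner entry `(0, 0)` joins them. Along a path every entry can
be made `1` by diagonal scalings, because the signs only enter through powers of `σ, τ = ±1`;
listing rows and columns in path order then turns the pair into the Jordan pair.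
-/

namespace PairEquiv

variable {F : Type*} [Field F] {n : ℕ} {A B A' B' A'' B'' : Matrix (Fin n) (Fin n) F}

theorem trans (h : PairEquiv A B A' B') (h' : PairEquiv A' B' A'' B'') :
    PairEquiv A B A'' B'' := by
  obtain ⟨R, S, hR, hS, rfl, rfl⟩ := h
  obtain ⟨R', S', hR', hS', rfl, rfl⟩ := h'
  exact ⟨R' * R, S * S', hR'.mul hR, hS.mul hS', by noncomm_ring, by noncomm_ring⟩

theorem of_entries {d e : Fin n → F} (hd : ∀ i, IsUnit (d i)) (he : ∀ j, IsUnit (e j))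
    (hA : ∀ i j, d i * A i j * e j = A' i j) (hB : ∀ i j, d i * B i j * e j = B' i j) :
    PairEquiv A B A' B' := by
  refine ⟨diagonal d, diagonal e, isUnit_diagonal.mpr (Pi.isUnit_iff.mpr hd),
    isUnit_diagonal.mpr (Pi.isUnit_iff.mpr he), ?_, ?_⟩ <;>
  ext i j <;> simp [hA, hB]

theorem submatrix {r c : Fin n → Fin n} (hr : r.Injective) (hc : c.Injective) :
    PairEquiv A B (A.submatrix r c) (B.submatrix r c) := by
  let σ : Equiv.Perm (Fin n) := Equiv.ofBijective r hr.bijective_of_finite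
  let τ : Equiv.Perm (Fin n) := Equiv.ofBijective c hc.bijective_of_finite
  have hP : ∀ π : Equiv.Perm (Fin n), IsUnit (π.permMatrix F) := fun π => by
    rw [isUnit_iff_isUnit_det, det_permutation]
    exact (Units.isUnit _).map (Int.castRingHom F)
  refine ⟨σ.permMatrix F, τ⁻¹.permMatrix F, hP σ, hP τ⁻¹, ?_, ?_⟩ <;>
  simp [Equiv.Perm.permMatrix, PEquiv.toMatrix_toPEquiv_mul, PEquiv.mul_toMatrix_toPEquiv,
    Equiv.Perm.inv_def, σ, τ]

end PairEquiv

section Scaling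

variable {R : Type*} [CommRing R]

theorem pow_eq_one_of_mul_self_eq_one {x : R} (hx : x * x = 1) {m : ℕ} (hm : m % 2 = 0) :
    x ^ m = 1 := by
  obtain ⟨l, rfl⟩ : ∃ l, m = l + l := ⟨m / 2, by omega⟩
  rw [pow_add, ← mul_pow, hx, one_pow]

/-- For `n = 2k`, `Mblocks t n = M^t_k`, `Mshifted s n = 0₁ ⊕ M^s_{k-1} ⊕ 0₁` and
`MshiftedCorner s n = I₁ ⊕ M^s_{k-1} ⊕ 0₁`. -/
def Mblocks (t : R) (n : ℕ) : Matrix (Fin n) (Fin n) R :=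
  of fun i j =>
    if (j : ℕ) = (i : ℕ) + 1 ∧ (i : ℕ) % 2 = 0 then 1
    else if (i : ℕ) = (j : ℕ) + 1 ∧ (j : ℕ) % 2 = 0 then t else 0

def Mshifted (s : R) (n : ℕ) : Matrix (Fin n) (Fin n) R :=
  of fun i j =>
    if (j : ℕ) = (i : ℕ) + 1 ∧ (i : ℕ) % 2 = 1 then 1
    else if (i : ℕ) = (j : ℕ) + 1 ∧ (j : ℕ) % 2 = 1 then s else 0

def MshiftedCorner (s : R) (n : ℕ) : Matrix (Fin n) (Fin n) R :=
  of fun i j => if (i : ℕ) = 0 ∧ (j : ℕ) = 0 then 1 else Mshifted s n i j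

/-- `rowSign i * colSign (i + 1) = 1`, while `rowSign (j + 1) * colSign j` is the inverse of the
entry `s` or `t` at `(j + 1, j)`, using `s⁻¹ = s` and `t⁻¹ = t`. -/
def rowSign (s t : R) (i : ℕ) : R := (if i % 2 = 0 then s else t) ^ ((i + 1) / 2)

def colSign (s t : R) (j : ℕ) : R := (if j % 2 = 1 then s else t) ^ (j / 2)

theorem isUnit_pow_of_mul_self_eq_one {x : R} (hx : x * x = 1) (m : ℕ) : IsUnit (x ^ m) :=
  (IsUnit.of_mul_eq_one _ hx).pow m

variable {s t : R}

theorem isUnit_rowSign (hs : s * s = 1) (ht : t * t = 1) (i : ℕ) : IsUnit (rowSign s t i) := by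
  unfold rowSign; split_ifs
  exacts [isUnit_pow_of_mul_self_eq_one hs _, isUnit_pow_of_mul_self_eq_one ht _]

theorem isUnit_colSign (hs : s * s = 1) (ht : t * t = 1) (j : ℕ) : IsUnit (colSign s t j) := by
  unfold colSign; split_ifs
  exacts [isUnit_pow_of_mul_self_eq_one hs _, isUnit_pow_of_mul_self_eq_one ht _]

theorem rowSign_mul_Mshifted_mul_colSign (hs : s * s = 1) (ht : t * t = 1) {n : ℕ}
    (i j : Fin n) : rowSign s t i * Mshifted s n i j * colSign s t j = Mshifted 1 n i j := by
  simp only [Mshifted, of_apply, rowSign, colSign]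
  split_ifs <;> (try simp only [mul_zero, zero_mul, mul_one, ← pow_succ, ← pow_add]) <;>
    first
    | (exfalso; omega)
    | exact pow_eq_one_of_mul_self_eq_one hs (by omega)
    | exact pow_eq_one_of_mul_self_eq_one ht (by omega)

theorem rowSign_mul_Mblocks_mul_colSign (hs : s * s = 1) (ht : t * t = 1) {n : ℕ}
    (i j : Fin n) : rowSign s t i * Mblocks t n i j * colSign s t j = Mblocks 1 n i j := by
  simp only [Mblocks, of_apply, rowSign, colSign]
  split_ifs <;> (try simp only [mul_zero, zero_mul, mul_one, ← pow_succ, ← pow_add]) <;>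
    first
    | (exfalso; omega)
    | exact pow_eq_one_of_mul_self_eq_one hs (by omega)
    | exact pow_eq_one_of_mul_self_eq_one ht (by omega)

theorem rowSign_mul_MshiftedCorner_mul_colSign (hs : s * s = 1) (ht : t * t = 1) {n : ℕ}
    (i j : Fin n) :
    rowSign s t i * MshiftedCorner s n i j * colSign s t j = MshiftedCorner 1 n i j := by
  by_cases h : (i : ℕ) = 0 ∧ (j : ℕ) = 0
  · simp [MshiftedCorner, rowSign, colSign, h]
  · simp only [MshiftedCorner, of_apply, if_neg h]
    exact rowSign_mul_Mshifted_mul_colSign hs ht i j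

end Scaling

/-! Rows and columns in the order in which the paths of nonzero entries visit them. -/

section PathOrder

variable (k : ℕ)

def splitRow (i : Fin (2 * k)) : Fin (2 * k) :=
  ⟨if (i : ℕ) < k then 2 * i + 1 else 2 * (2 * k - 1 - i), by split_ifs <;> omega⟩

def splitCol (j : Fin (2 * k)) : Fin (2 * k) :=
  ⟨if (j : ℕ) < k then 2 * j else 2 * (2 * k - 1 - j) + 1, by split_ifs <;> omega⟩

def chainRow (i : Fin (2 * k)) : Fin (2 * k) :=
  ⟨if (i : ℕ) < k then 2 * (k - 1 - i) else 2 * (i - k) + 1, by split_ifs <;> omega⟩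

def chainCol (j : Fin (2 * k)) : Fin (2 * k) :=
  ⟨if (j : ℕ) < k then 2 * (k - 1 - j) + 1 else 2 * (j - k), by split_ifs <;> omega⟩

theorem splitRow_val (i : Fin (2 * k)) :
    (i < k ∧ (splitRow k i : ℕ) = 2 * i + 1) ∨
      (k ≤ i ∧ (splitRow k i : ℕ) = 2 * (2 * k - 1 - i)) := by
  simp only [splitRow]; split_ifs <;> omega

theorem splitCol_val (j : Fin (2 * k)) :
    (j < k ∧ (splitCol k j : ℕ) = 2 * j) ∨
      (k ≤ j ∧ (splitCol k j : ℕ) = 2 * (2 * k - 1 - j) + 1) := by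
  simp only [splitCol]; split_ifs <;> omega

theorem chainRow_val (i : Fin (2 * k)) :
    (i < k ∧ (chainRow k i : ℕ) = 2 * (k - 1 - i)) ∨
      (k ≤ i ∧ (chainRow k i : ℕ) = 2 * (i - k) + 1) := by
  simp only [chainRow]; split_ifs <;> omega

theorem chainCol_val (j : Fin (2 * k)) :
    (j < k ∧ (chainCol k j : ℕ) = 2 * (k - 1 - j) + 1) ∨
      (k ≤ j ∧ (chainCol k j : ℕ) = 2 * (j - k)) := by
  simp only [chainCol]; split_ifs <;> omega

theorem splitRow_injective : (splitRow k).Injective := fun i i' h => by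
  have := splitRow_val k i; have := splitRow_val k i'; have := congrArg Fin.val h; omega

theorem splitCol_injective : (splitCol k).Injective := fun j j' h => by
  have := splitCol_val k j; have := splitCol_val k j'; have := congrArg Fin.val h; omega

theorem chainRow_injective : (chainRow k).Injective := fun i i' h => by
  have := chainRow_val k i; have := chainRow_val k i'; have := congrArg Fin.val h; omega

theorem chainCol_injective : (chainCol k).Injective := fun j j' h => by
  have := chainCol_val k j; have := chainCol_val k j'; have := congrArg Fin.val h; omega

end PathOrder

def doubleJnil (F : Type*) [Field F] (k : ℕ) : Matrix (Fin (2 * k)) (Fin (2 * k)) F :=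
  of fun i j => if (j : ℕ) = (i : ℕ) + 1 ∧ (j : ℕ) ≠ k then 1 else 0

section Reordering

variable (F : Type*) [Field F] (k : ℕ)

theorem Mshifted_one_submatrix_split :
    (Mshifted (1 : F) (2 * k)).submatrix (splitRow k) (splitCol k) = doubleJnil F k := by
  ext i j
  have := splitRow_val k i; have := splitCol_val k j
  simp only [Mshifted, doubleJnil, submatrix_apply, of_apply]
  split_ifs <;> first | rfl | (exfalso; omega)

theorem Mblocks_one_submatrix_split :
    (Mblocks (1 : F) (2 * k)).submatrix (splitRow k) (splitCol k) = 1 := by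
  ext i j
  have := splitRow_val k i; have := splitCol_val k j
  simp only [Mblocks, one_apply, Fin.ext_iff, submatrix_apply, of_apply]
  split_ifs <;> first | rfl | (exfalso; omega)

theorem MshiftedCorner_one_submatrix_chain :
    (MshiftedCorner (1 : F) (2 * k)).submatrix (chainRow k) (chainCol k) = Jnil F (2 * k) := by
  ext i j
  have := chainRow_val k i; have := chainCol_val k j
  simp only [MshiftedCorner, Mshifted, Jnil, submatrix_apply, of_apply]
  split_ifs <;> first | rfl | (exfalso; omega)

theorem Mblocks_one_submatrix_chain :
    (Mblocks (1 : F) (2 * k)).submatrix (chainRow k) (chainCol k) = 1 := by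
  ext i j
  have := chainRow_val k i; have := chainCol_val k j
  simp only [Mblocks, one_apply, Fin.ext_iff, submatrix_apply, of_apply]
  split_ifs <;> first | rfl | (exfalso; omega)

end Reordering

section

variable {F : Type*} [Field F] {s t : F}

theorem pairEquiv_Mshifted_Mblocks_one (hs : s * s = 1) (ht : t * t = 1) (n : ℕ) :
    PairEquiv (Mshifted s n) (Mblocks t n) (Mshifted 1 n) (Mblocks 1 n) :=
  .of_entries (fun i => isUnit_rowSign hs ht i) (fun j => isUnit_colSign hs ht j)
    (rowSign_mul_Mshifted_mul_colSign hs ht) (rowSign_mul_Mblocks_mul_colSign hs ht)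

theorem pairEquiv_MshiftedCorner_Mblocks_one (hs : s * s = 1) (ht : t * t = 1) (n : ℕ) :
    PairEquiv (MshiftedCorner s n) (Mblocks t n) (MshiftedCorner 1 n) (Mblocks 1 n) :=
  .of_entries (fun i => isUnit_rowSign hs ht i) (fun j => isUnit_colSign hs ht j)
    (rowSign_mul_MshiftedCorner_mul_colSign hs ht) (rowSign_mul_Mblocks_mul_colSign hs ht)

theorem pairEquiv_Mshifted_Mblocks_doubleJnil (hs : s * s = 1) (ht : t * t = 1) (k : ℕ) :
    PairEquiv (Mshifted s (2 * k)) (Mblocks t (2 * k)) (doubleJnil F k) 1 := by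
  have h := PairEquiv.submatrix (A := Mshifted (1 : F) (2 * k)) (B := Mblocks 1 (2 * k))
    (splitRow_injective k) (splitCol_injective k)
  rw [Mshifted_one_submatrix_split, Mblocks_one_submatrix_split] at h
  exact (pairEquiv_Mshifted_Mblocks_one hs ht _).trans h

theorem pairEquiv_MshiftedCorner_Mblocks_Jnil (hs : s * s = 1) (ht : t * t = 1) (k : ℕ) :
    PairEquiv (MshiftedCorner s (2 * k)) (Mblocks t (2 * k)) (Jnil F (2 * k)) 1 := by
  have h := PairEquiv.submatrix (A := MshiftedCorner (1 : F) (2 * k)) (B := Mblocks 1 (2 * k))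
    (chainRow_injective k) (chainCol_injective k)
  rw [MshiftedCorner_one_submatrix_chain, Mblocks_one_submatrix_chain] at h
  exact (pairEquiv_MshiftedCorner_Mblocks_one hs ht _).trans h

end

theorem stmt_9_general (F : Type*) [Field F] (k : ℕ)
    (s t : F) (hs : s = 1 ∨ s = -1) (ht : t = 1 ∨ t = -1) :
    PairEquiv
      -- 0₁ ⊕ M^σ_{k-1} ⊕ 0₁
      (Matrix.of fun i j : Fin (2 * k) =>
        if (j : ℕ) = (i : ℕ) + 1 ∧ (i : ℕ) % 2 = 1 then (1 : F)
        else if (i : ℕ) = (j : ℕ) + 1 ∧ (j : ℕ) % 2 = 1 then s else 0)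
      -- M^τ_k
      (Matrix.of fun i j : Fin (2 * k) =>
        if (j : ℕ) = (i : ℕ) + 1 ∧ (i : ℕ) % 2 = 0 then (1 : F)
        else if (i : ℕ) = (j : ℕ) + 1 ∧ (j : ℕ) % 2 = 0 then t else 0)
      -- J_k(0) ⊕ J_k(0)
      (Matrix.of fun i j : Fin (2 * k) =>
        if (j : ℕ) = (i : ℕ) + 1 ∧ (j : ℕ) ≠ k then (1 : F) else 0)
      (1 : Matrix (Fin (2 * k)) (Fin (2 * k)) F)
    ∧
    PairEquiv
      -- I₁ ⊕ M^σ_{k-1} ⊕ 0₁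
      (Matrix.of fun i j : Fin (2 * k) =>
        if (i : ℕ) = 0 ∧ (j : ℕ) = 0 then (1 : F)
        else if (j : ℕ) = (i : ℕ) + 1 ∧ (i : ℕ) % 2 = 1 then 1
        else if (i : ℕ) = (j : ℕ) + 1 ∧ (j : ℕ) % 2 = 1 then s else 0)
      -- M^τ_k
      (Matrix.of fun i j : Fin (2 * k) =>
        if (j : ℕ) = (i : ℕ) + 1 ∧ (i : ℕ) % 2 = 0 then (1 : F)
        else if (i : ℕ) = (j : ℕ) + 1 ∧ (j : ℕ) % 2 = 0 then t else 0)
      (Jnil F (2 * k))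
      (1 : Matrix (Fin (2 * k)) (Fin (2 * k)) F) :=
  have hs' := mul_self_eq_one_iff.mpr hs
  have ht' := mul_self_eq_one_iff.mpr ht
  ⟨pairEquiv_Mshifted_Mblocks_doubleJnil hs' ht' k, pairEquiv_MshiftedCorner_Mblocks_Jnil hs' ht' k⟩

/-- `(0₁ ⊕ M^σ_{k-1} ⊕ 0₁, M^τ_k) ≈ (J_k(0), I_k) ⊕ (J_k(0), I_k)` and
`(I₁ ⊕ M^σ_{k-1} ⊕ 0₁, M^τ_k) ≈ (J_{2k}(0), I_{2k})`, where `M^σ_j` is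
block-diagonal with `j` blocks `[[0,1],[σ,0]]`, as `2k × 2k` matrices. -/
theorem stmt_9 (F : Type*) [Field F] (k : ℕ) (hk : 0 < k)
    (s t : F) (hs : s = 1 ∨ s = -1) (ht : t = 1 ∨ t = -1) :
    PairEquiv
      -- 0₁ ⊕ M^σ_{k-1} ⊕ 0₁
      (Matrix.of fun i j : Fin (2 * k) =>
        if (j : ℕ) = (i : ℕ) + 1 ∧ (i : ℕ) % 2 = 1 then (1 : F)
        else if (i : ℕ) = (j : ℕ) + 1 ∧ (j : ℕ) % 2 = 1 then s else 0)
      -- M^τ_k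
      (Matrix.of fun i j : Fin (2 * k) =>
        if (j : ℕ) = (i : ℕ) + 1 ∧ (i : ℕ) % 2 = 0 then (1 : F)
        else if (i : ℕ) = (j : ℕ) + 1 ∧ (j : ℕ) % 2 = 0 then t else 0)
      -- J_k(0) ⊕ J_k(0)
      (Matrix.of fun i j : Fin (2 * k) =>
        if (j : ℕ) = (i : ℕ) + 1 ∧ (j : ℕ) ≠ k then (1 : F) else 0)
      (1 : Matrix (Fin (2 * k)) (Fin (2 * k)) F)
    ∧
    PairEquiv
      -- I₁ ⊕ M^σ_{k-1} ⊕ 0₁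
      (Matrix.of fun i j : Fin (2 * k) =>
        if (i : ℕ) = 0 ∧ (j : ℕ) = 0 then (1 : F)
        else if (j : ℕ) = (i : ℕ) + 1 ∧ (i : ℕ) % 2 = 1 then 1
        else if (i : ℕ) = (j : ℕ) + 1 ∧ (j : ℕ) % 2 = 1 then s else 0)
      -- M^τ_k
      (Matrix.of fun i j : Fin (2 * k) =>
        if (j : ℕ) = (i : ℕ) + 1 ∧ (i : ℕ) % 2 = 0 then (1 : F)
        else if (i : ℕ) = (j : ℕ) + 1 ∧ (j : ℕ) % 2 = 0 then t else 0)
      (Jnil F (2 * k))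
      (1 : Matrix (Fin (2 * k)) (Fin (2 * k)) F) :=
  stmt_9_general F k s t hs ht
end

section
/- Let F be an algebraically closed field of characteristic different from 2 and λ ∈ F with λ ≠ ±1. Let A be the 2k×2k tridiagonal matrix with zero diagonal, all superdiagonal entries equal to 1, and all subdiagonal entries equal to λ. Then the pair (Aᵀ, A) is equivalent to (J_k(λ), I_k) ⊕ (I_k, J_k(λ)). -/
open Matrix

/-!
Order the indices of `A` as evens, then odds. With `N` the nilpotent shift, `X = 1 + λN` and
`J = λ + N`, the matrix `A` becomes the antidiagonal block matrix `[[0, Xᵀ], [J, 0]]` and `Aᵀ`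
becomes `[[0, Jᵀ], [X, 0]]`, so up to a swap of the column blocks the pair `(Aᵀ, A)` is the
direct sum of `(Jᵀ, Xᵀ)` and `(X, J)`; reversing the index order turns the first summand into
`(J, X)`. Everything thus reduces to `(X, J) ~ (1, J)`, i.e. to `J X⁻¹` being similar to `J`.
Now `J X⁻¹ = λ + M` with `M = (1 - λ²) N X⁻¹`, and `M` is conjugate to `N`: since the last
row of `X⁻¹` is that of the identity, the Krylov matrix with columns `M^(k-1-j) e` (`e` the
last basis vector) is upper triangular with powers of `1 - λ²` on the diagonal, and it
intertwines `M` with `N` because `M^k = 0`.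
-/

section PairEquivalent

variable {α : Type*} {n : Type*} [Fintype n] [DecidableEq n]

def PairEquivalent [Semiring α] (A B A' B' : Matrix n n α) : Prop :=
  ∃ P Q : Matrix n n α, IsUnit P ∧ IsUnit Q ∧ P * A * Q = A' ∧ P * B * Q = B'

namespace PairEquivalent

section Semiring

variable [Semiring α] {A B A' B' A'' B'' : Matrix n n α}

theorem swap (h : PairEquivalent A B A' B') : PairEquivalent B A B' A' :=
  let ⟨P, Q, hP, hQ, hA, hB⟩ := h
  ⟨P, Q, hP, hQ, hB, hA⟩

theorem trans (h : PairEquivalent A B A' B') (h' : PairEquivalent A' B' A'' B'') :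
    PairEquivalent A B A'' B'' := by
  obtain ⟨P, Q, hP, hQ, hA, hB⟩ := h
  obtain ⟨P', Q', hP', hQ', hA', hB'⟩ := h'
  refine ⟨P' * P, Q * Q', hP'.mul hP, hQ.mul hQ', ?_, ?_⟩
  · rw [← hA', ← hA]
    simp only [mul_assoc]
  · rw [← hB', ← hB]
    simp only [mul_assoc]

end Semiring

variable [CommRing α]

theorem submatrix_self (A B : Matrix n n α) (e : n ≃ n) :
    PairEquivalent A B (A.submatrix e e) (B.submatrix e e) := by
  have hone (e₁ e₂ : n ≃ n) : IsUnit ((1 : Matrix n n α).submatrix e₁ e₂) :=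
    (isUnit_submatrix_equiv _ _).2 isUnit_one
  refine ⟨submatrix 1 e (Equiv.refl n), submatrix 1 (Equiv.refl n) e, hone _ _, hone _ _,
    ?_, ?_⟩ <;>
  · rw [one_submatrix_mul, mul_submatrix_one]
    simp

theorem fromBlocks_antidiag {A A' B B' C C' D D' : Matrix n n α}
    (hA : PairEquivalent A A' C C') (hB : PairEquivalent B B' D D') :
    PairEquivalent (fromBlocks 0 A B 0) (fromBlocks 0 A' B' 0)
      (fromBlocks C 0 0 D) (fromBlocks C' 0 0 D') := by
  obtain ⟨P₁, Q₁, hP₁, hQ₁, hA, hA'⟩ := hA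
  obtain ⟨P₂, Q₂, hP₂, hQ₂, hB, hB'⟩ := hB
  have isUnit_diag {X Y : Matrix n n α} (hX : IsUnit X) (hY : IsUnit Y) :
      IsUnit (fromBlocks X 0 0 Y) := by
    rw [isUnit_iff_isUnit_det, det_fromBlocks_zero₂₁]
    exact ((isUnit_iff_isUnit_det _).1 hX).mul ((isUnit_iff_isUnit_det _).1 hY)
  refine ⟨fromBlocks P₁ 0 0 P₂, (fromBlocks Q₂ 0 0 Q₁).submatrix id (Equiv.sumComm n n),
    isUnit_diag hP₁ hP₂, (isUnit_submatrix_equiv (Equiv.refl _) _).2 (isUnit_diag hQ₂ hQ₁),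
    ?_, ?_⟩ <;>
  · simp [fromBlocks_multiply, *]

end PairEquivalent

theorem pairEquiv_of_submatrix {F ι : Type*} [Field F] [Fintype ι] [DecidableEq ι] {m : ℕ}
    (e e' : ι ≃ Fin m) {A B A' B' : Matrix (Fin m) (Fin m) F}
    (h : PairEquivalent (A.submatrix e e) (B.submatrix e e) (A'.submatrix e' e')
      (B'.submatrix e' e')) :
    PairEquiv A B A' B' := by
  obtain ⟨P, Q, hP, hQ, hA, hB⟩ := h
  have unreindex (M : Matrix (Fin m) (Fin m) F) :
      M = (M.submatrix e e).submatrix e.symm e.symm := by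
    simp
  refine ⟨P.submatrix e'.symm e.symm, Q.submatrix e.symm e'.symm,
    (isUnit_submatrix_equiv _ _).2 hP, (isUnit_submatrix_equiv _ _).2 hQ, ?_, ?_⟩
  · rw [unreindex A, submatrix_mul_equiv, submatrix_mul_equiv, hA]
    simp
  · rw [unreindex B, submatrix_mul_equiv, submatrix_mul_equiv, hB]
    simp

end PairEquivalent

namespace Matrix

variable {α : Type*} {k : ℕ}

def shift (α : Type*) [Zero α] [One α] (k : ℕ) : Matrix (Fin k) (Fin k) α :=
  of fun i j => if (j : ℕ) = i + 1 then 1 else 0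

def jordanBlock [Semiring α] (k : ℕ) (lam : α) : Matrix (Fin k) (Fin k) α :=
  lam • 1 + shift α k

def evenOddEquiv (k : ℕ) : Fin k ⊕ Fin k ≃ Fin (2 * k) where
  toFun := Sum.elim (fun a => ⟨2 * a, by omega⟩) (fun a => ⟨2 * a + 1, by omega⟩)
  invFun i := if (i : ℕ) % 2 = 0 then .inl ⟨i / 2, by omega⟩ else .inr ⟨i / 2, by omega⟩
  left_inv := by
    rintro (a | a)
    · simp
    · simp [Fin.ext_iff]
      omega
  right_inv i := by
    by_cases h : (i : ℕ) % 2 = 0 <;> simp [h, Fin.ext_iff] <;> omega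

def halvesEquiv (k : ℕ) : Fin k ⊕ Fin k ≃ Fin (2 * k) :=
  finSumFinEquiv.trans (finCongr (two_mul k).symm)

section Semiring

variable [Semiring α]

theorem shift_mul_apply {m : Type*} [Fintype m] (Z : Matrix (Fin k) m α) (i : Fin k) (j : m) :
    (shift α k * Z) i j = if h : (i : ℕ) + 1 < k then Z ⟨i + 1, h⟩ j else 0 := by
  simp only [mul_apply, shift, of_apply, ite_mul, one_mul, zero_mul]
  split_ifs with h
  · have hval (l : Fin k) : (l : ℕ) = i + 1 ↔ l = ⟨i + 1, h⟩ := by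
      rw [Fin.ext_iff]
    simp [hval]
  · exact Finset.sum_eq_zero fun l _ => if_neg (by omega)

theorem mul_shift_apply {m : Type*} [Fintype m] (Z : Matrix m (Fin k) α) (i : m) (j : Fin k) :
    (Z * shift α k) i j = if h : 0 < (j : ℕ) then Z i ⟨j - 1, by omega⟩ else 0 := by
  simp only [mul_apply, shift, of_apply, mul_ite, mul_one, mul_zero]
  split_ifs with h
  · have hval (l : Fin k) : (j : ℕ) = l + 1 ↔ l = ⟨j - 1, by omega⟩ := by
      rw [Fin.ext_iff]
      show (j : ℕ) = l + 1 ↔ (l : ℕ) = j - 1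
      omega
    simp [hval]
  · exact Finset.sum_eq_zero fun l _ => if_neg (by omega)

theorem shift_pow_mul_apply {m : Type*} [Fintype m] (p : ℕ) (Z : Matrix (Fin k) m α)
    (i : Fin k) (j : m) :
    (shift α k ^ p * Z) i j = if h : (i : ℕ) + p < k then Z ⟨i + p, h⟩ j else 0 := by
  induction p generalizing i with
  | zero => simp
  | succ p ih =>
    rw [pow_succ', Matrix.mul_assoc, shift_mul_apply]
    split_ifs with h₁ h₂ h₂
    · simp only [ih, Nat.add_assoc, Nat.add_comm 1 p, dif_pos h₂]
    · simp only [ih, Nat.add_assoc, Nat.add_comm 1 p, dif_neg h₂]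
    · omega
    · rfl

theorem shift_pow_self : shift α k ^ k = 0 := by
  ext i j
  simpa [i.isLt] using shift_pow_mul_apply (α := α) k 1 i j

theorem isNilpotent_shift : IsNilpotent (shift α k) :=
  ⟨k, shift_pow_self⟩

theorem shift_last (n : ℕ) : shift α (n + 1) (Fin.last n) = 0 := by
  ext j
  simp [shift]
  omega

theorem transpose_shift_submatrix_revPerm :
    (shift α k)ᵀ.submatrix Fin.revPerm Fin.revPerm = shift α k := by
  ext i j
  simp only [shift, submatrix_apply, transpose_apply, of_apply, Fin.revPerm_apply, Fin.val_rev]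
  have := i.isLt
  have := j.isLt
  split_ifs <;> first | rfl | (exfalso; omega)

theorem transpose_smul_one_add_smul_shift_submatrix_revPerm (a b : α) :
    (a • 1 + b • shift α k)ᵀ.submatrix Fin.revPerm Fin.revPerm =
      a • 1 + b • shift α k := by
  ext i j
  have h := congrFun₂ (transpose_shift_submatrix_revPerm (α := α) (k := k)) i j
  simp only [submatrix_apply, transpose_apply, Fin.revPerm_apply] at h
  simp [one_apply, h]

theorem tridiag_submatrix_evenOddEquiv (k : ℕ) (lam : α) :
    (of fun i j : Fin (2 * k) =>
        if (j : ℕ) = (i : ℕ) + 1 then (1 : α)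
        else if (i : ℕ) = (j : ℕ) + 1 then lam else 0).submatrix
      (evenOddEquiv k) (evenOddEquiv k) =
      fromBlocks 0 (1 + lam • shift α k)ᵀ (jordanBlock k lam) 0 := by
  ext (a | a) (b | b) <;> simp [evenOddEquiv, jordanBlock, shift, one_apply, Fin.ext_iff]
  all_goals split_ifs <;> first | (exfalso; omega) | simp

theorem jordanBlock_sum_one_submatrix_halvesEquiv (k : ℕ) (lam : α) :
    (of fun i j : Fin (2 * k) =>
        if (i : ℕ) < k ∧ (j : ℕ) < k then
          (if i = j then lam else if (j : ℕ) = (i : ℕ) + 1 then 1 else 0)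
        else if k ≤ (i : ℕ) ∧ k ≤ (j : ℕ) then (if i = j then 1 else 0) else 0).submatrix
      (halvesEquiv k) (halvesEquiv k) = fromBlocks (jordanBlock k lam) 0 0 1 := by
  ext (a | a) (b | b) <;> simp [halvesEquiv, jordanBlock, shift, one_apply, Fin.ext_iff]
  all_goals split_ifs <;> first | (exfalso; omega) | simp

theorem one_sum_jordanBlock_submatrix_halvesEquiv (k : ℕ) (lam : α) :
    (of fun i j : Fin (2 * k) =>
        if (i : ℕ) < k ∧ (j : ℕ) < k then (if i = j then 1 else 0)
        else if k ≤ (i : ℕ) ∧ k ≤ (j : ℕ) then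
          (if i = j then lam else if (j : ℕ) = (i : ℕ) + 1 then 1 else 0)
        else 0).submatrix (halvesEquiv k) (halvesEquiv k) =
      fromBlocks 1 0 0 (jordanBlock k lam) := by
  ext (a | a) (b | b) <;> simp [halvesEquiv, jordanBlock, shift, one_apply, Fin.ext_iff]
  all_goals split_ifs <;> first | (exfalso; omega) | simp

end Semiring

section Krylov

variable {n : ℕ}

def krylov [Semiring α] (M : Matrix (Fin (n + 1)) (Fin (n + 1)) α) :
    Matrix (Fin (n + 1)) (Fin (n + 1)) α :=
  of fun i j => (M ^ (n - j)) i (Fin.last n)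

theorem mul_krylov [Semiring α] {M : Matrix (Fin (n + 1)) (Fin (n + 1)) α}
    (hM : M ^ (n + 1) = 0) : M * krylov M = krylov M * shift α (n + 1) := by
  ext i j
  have hcol : (M * krylov M) i j = (M ^ (n - j + 1)) i (Fin.last n) := by
    rw [pow_succ']
    rfl
  rw [hcol, mul_shift_apply]
  split_ifs with hj
  · rw [krylov, of_apply, show n - (j - 1) = n - j + 1 by omega]
  · rw [show n - j + 1 = n + 1 by omega, hM]
    rfl

theorem krylov_shift_mul_apply [Semiring α] {U : Matrix (Fin (n + 1)) (Fin (n + 1)) α}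
    (hU : Commute (shift α (n + 1)) U) (i j : Fin (n + 1)) :
    krylov (shift α (n + 1) * U) i j =
      if h : (i : ℕ) + (n - j) < n + 1 then (U ^ (n - j)) ⟨i + (n - j), h⟩ (Fin.last n)
      else 0 := by
  rw [krylov, of_apply, hU.mul_pow, shift_pow_mul_apply]

theorem pow_last_of_last_eq_smul_single [CommSemiring α]
    {U : Matrix (Fin (n + 1)) (Fin (n + 1)) α} {c : α}
    (hU : U (Fin.last n) = c • Pi.single (Fin.last n) 1) (p : ℕ) :
    (U ^ p) (Fin.last n) = c ^ p • Pi.single (Fin.last n) 1 := by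
  induction p with
  | zero => ext j; simp [one_apply, Pi.single_apply, eq_comm]
  | succ p ih =>
    calc (U ^ (p + 1)) (Fin.last n) = Pi.single (Fin.last n) 1 ᵥ* U ^ p ᵥ* U := by
          rw [vecMul_vecMul, single_one_vecMul, pow_succ]
          rfl
      _ = c ^ (p + 1) • Pi.single (Fin.last n) 1 := by
          rw [single_one_vecMul, row_apply', ih, smul_vecMul, single_one_vecMul, row_apply', hU,
            smul_smul, pow_succ]

theorem isUnit_krylov_shift_mul [CommRing α] {U : Matrix (Fin (n + 1)) (Fin (n + 1)) α}
    (hU : Commute (shift α (n + 1)) U) {c : α} (hc : IsUnit c)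
    (hlast : U (Fin.last n) = c • Pi.single (Fin.last n) 1) :
    IsUnit (krylov (shift α (n + 1) * U)) := by
  have htri : (krylov (shift α (n + 1) * U)).IsUpperTriangular := fun i j hij => by
    rw [krylov_shift_mul_apply hU, dif_neg]
    simp only [id, Fin.lt_def] at hij
    omega
  rw [isUnit_iff_isUnit_det, det_of_isUpperTriangular htri, IsUnit.prod_univ_iff]
  intro i
  have hdiag : (⟨i + (n - i), by omega⟩ : Fin (n + 1)) = Fin.last n := Fin.ext (by simp; omega)
  rw [krylov_shift_mul_apply hU, dif_pos (by omega), hdiag,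
    congrFun (pow_last_of_last_eq_smul_single hlast (n - i)) (Fin.last n)]
  simpa using hc.pow (n - i)

end Krylov

section CommRing

variable [CommRing α]

theorem inv_one_add_smul_shift_last {n : ℕ} {lam : α}
    (V : (Matrix (Fin (n + 1)) (Fin (n + 1)) α)ˣ)
    (hV : (V : Matrix _ _ α) = 1 + lam • shift α (n + 1)) :
    (↑V⁻¹ : Matrix _ _ α) (Fin.last n) = Pi.single (Fin.last n) 1 := by
  have hfix : Pi.single (Fin.last n) 1 ᵥ* (V : Matrix _ _ α) = Pi.single (Fin.last n) 1 := by
    ext j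
    simp [hV, congrFun (shift_last (α := α) n) j, one_apply, Pi.single_apply, eq_comm]
  calc (↑V⁻¹ : Matrix _ _ α) (Fin.last n)
      = Pi.single (Fin.last n) 1 ᵥ* (↑V⁻¹ : Matrix _ _ α) := by
        rw [single_one_vecMul]
        rfl
    _ = Pi.single (Fin.last n) 1 ᵥ* (V : Matrix (Fin (n + 1)) (Fin (n + 1)) α) ᵥ*
          (↑V⁻¹ : Matrix _ _ α) := by rw [hfix]
    _ = Pi.single (Fin.last n) 1 := by rw [vecMul_vecMul, Units.mul_inv, vecMul_one]

theorem pairEquivalent_one_add_smul_shift_jordanBlock {lam : α} (hlam : IsUnit (1 - lam ^ 2)) :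
    PairEquivalent (1 + lam • shift α k) (jordanBlock k lam) 1 (jordanBlock k lam) := by
  cases k with
  | zero => exact ⟨1, 1, isUnit_one, isUnit_one, Subsingleton.elim _ _, Subsingleton.elim _ _⟩
  | succ n =>
    set N := shift α (n + 1)
    obtain ⟨V, hV⟩ := ((isNilpotent_shift (α := α) (k := n + 1)).smul lam).isUnit_one_add
    set W : Matrix (Fin (n + 1)) (Fin (n + 1)) α := ↑V⁻¹
    set U := (1 - lam ^ 2) • W with hU
    have hNU : Commute N U := by
      refine Commute.smul_right (Commute.units_inv_right ?_) _
      rw [hV]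
      exact (Commute.one_right N).add_right ((Commute.refl N).smul_right lam)
    have hJW : jordanBlock (n + 1) lam * W = lam • 1 + N * U := by
      have hJ : jordanBlock (n + 1) lam = lam • (V : Matrix _ _ α) + (1 - lam ^ 2) • N := by
        rw [hV, jordanBlock]
        module
      rw [hJ, add_mul, smul_mul, Units.mul_inv, smul_mul, hU, Matrix.mul_smul]
    obtain ⟨Q, hQ⟩ := isUnit_krylov_shift_mul hNU hlam
      (congrArg ((1 - lam ^ 2) • ·) (inv_one_add_smul_shift_last V hV))
    have hNUQ : N * U * Q = Q * N := by
      rw [hQ]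
      exact mul_krylov (by rw [hNU.mul_pow, shift_pow_self, zero_mul])
    refine ⟨↑Q⁻¹, W * Q, Q⁻¹.isUnit, V⁻¹.isUnit.mul Q.isUnit, ?_, ?_⟩
    · rw [← hV, mul_assoc, Units.mul_inv_cancel_left, Units.inv_mul]
    · have hconj : (lam • 1 + N * U) * Q = Q * jordanBlock (n + 1) lam := by
        rw [add_mul, hNUQ, jordanBlock, mul_add, smul_mul_assoc, mul_smul_comm, one_mul, mul_one]
      rw [mul_assoc, ← mul_assoc (jordanBlock _ _), hJW, hconj, Units.inv_mul_cancel_left]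

theorem pairEquivalent_transpose_jordanBlock {lam : α} (hlam : IsUnit (1 - lam ^ 2)) :
    PairEquivalent (jordanBlock k lam)ᵀ (1 + lam • shift α k)ᵀ (jordanBlock k lam) 1 := by
  have h :=
    PairEquivalent.submatrix_self (jordanBlock k lam)ᵀ (1 + lam • shift α k)ᵀ Fin.revPerm
  have hJ : (jordanBlock k lam)ᵀ.submatrix Fin.revPerm Fin.revPerm = jordanBlock k lam := by
    simpa [jordanBlock] using
      transpose_smul_one_add_smul_shift_submatrix_revPerm (α := α) (k := k) lam 1
  have hX :
      (1 + lam • shift α k)ᵀ.submatrix Fin.revPerm Fin.revPerm = 1 + lam • shift α k := by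
    simpa using transpose_smul_one_add_smul_shift_submatrix_revPerm (α := α) (k := k) 1 lam
  rw [hJ, hX] at h
  exact h.trans (pairEquivalent_one_add_smul_shift_jordanBlock hlam).swap

end CommRing

end Matrix

theorem stmt_10_general (F : Type*) [Field F]
    (k : ℕ) (lam : F) (h1 : lam ≠ 1) (h2 : lam ≠ -1) :
    PairEquiv
      (Matrix.of fun i j : Fin (2 * k) =>
        if (j : ℕ) = (i : ℕ) + 1 then (1 : F)
        else if (i : ℕ) = (j : ℕ) + 1 then lam else 0)ᵀ
      (Matrix.of fun i j : Fin (2 * k) =>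
        if (j : ℕ) = (i : ℕ) + 1 then (1 : F)
        else if (i : ℕ) = (j : ℕ) + 1 then lam else 0)
      -- J_k(λ) ⊕ I_k
      (Matrix.of fun i j : Fin (2 * k) =>
        if (i : ℕ) < k ∧ (j : ℕ) < k then
          (if i = j then lam else if (j : ℕ) = (i : ℕ) + 1 then 1 else 0)
        else if k ≤ (i : ℕ) ∧ k ≤ (j : ℕ) then (if i = j then 1 else 0) else 0)
      -- I_k ⊕ J_k(λ)
      (Matrix.of fun i j : Fin (2 * k) =>
        if (i : ℕ) < k ∧ (j : ℕ) < k then (if i = j then 1 else 0)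
        else if k ≤ (i : ℕ) ∧ k ≤ (j : ℕ) then
          (if i = j then lam else if (j : ℕ) = (i : ℕ) + 1 then 1 else 0)
        else 0) := by
  have hlam : IsUnit (1 - lam ^ 2) :=
    (sub_ne_zero.2 (sq_ne_one_iff.2 ⟨h1, h2⟩).symm).isUnit
  refine pairEquiv_of_submatrix (evenOddEquiv k) (halvesEquiv k) ?_
  rw [← transpose_submatrix, tridiag_submatrix_evenOddEquiv, fromBlocks_transpose,
    transpose_transpose, transpose_zero, jordanBlock_sum_one_submatrix_halvesEquiv,
    one_sum_jordanBlock_submatrix_halvesEquiv]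
  exact (pairEquivalent_transpose_jordanBlock hlam).fromBlocks_antidiag
    (pairEquivalent_one_add_smul_shift_jordanBlock hlam)

/-- For the `2k×2k` tridiagonal matrix `A` with zero diagonal, superdiagonal `1`
and subdiagonal `λ` (with `λ ≠ ±1`), the pair `(Aᵀ, A)` is equivalent to
`(J_k(λ), I_k) ⊕ (I_k, J_k(λ))`. -/
theorem stmt_10 (F : Type*) [Field F] [IsAlgClosed F] (hchar : ringChar F ≠ 2)
    (k : ℕ) (hk : 0 < k) (lam : F) (h1 : lam ≠ 1) (h2 : lam ≠ -1) :
    PairEquiv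
      (Matrix.of fun i j : Fin (2 * k) =>
        if (j : ℕ) = (i : ℕ) + 1 then (1 : F)
        else if (i : ℕ) = (j : ℕ) + 1 then lam else 0)ᵀ
      (Matrix.of fun i j : Fin (2 * k) =>
        if (j : ℕ) = (i : ℕ) + 1 then (1 : F)
        else if (i : ℕ) = (j : ℕ) + 1 then lam else 0)
      -- J_k(λ) ⊕ I_k
      (Matrix.of fun i j : Fin (2 * k) =>
        if (i : ℕ) < k ∧ (j : ℕ) < k then
          (if i = j then lam else if (j : ℕ) = (i : ℕ) + 1 then 1 else 0)
        else if k ≤ (i : ℕ) ∧ k ≤ (j : ℕ) then (if i = j then 1 else 0) else 0)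
      -- I_k ⊕ J_k(λ)
      (Matrix.of fun i j : Fin (2 * k) =>
        if (i : ℕ) < k ∧ (j : ℕ) < k then (if i = j then 1 else 0)
        else if k ≤ (i : ℕ) ∧ k ≤ (j : ℕ) then
          (if i = j then lam else if (j : ℕ) = (i : ℕ) + 1 then 1 else 0)
        else 0) :=
  stmt_10_general F k lam h1 h2
end

section
/- Let F be an algebraically closed field of characteristic different from 2 and λ, μ ∈ F with λ ≠ ±1, μ ≠ ±1. Let A_λ denote the 2k×2k tridiagonal matrix with zero diagonal, superdiagonal entries 1, and subdiagonal entries λ. Then A_λ and A_μ are congruent (Sᵀ·A_λ·S = A_μ for some nonsingular S) if and only if μ = λ or μ = λ⁻¹ (interpreting λ⁻¹ as requiring λ ≠ 0; for λ = 0 congruence holds only if μ = 0). -/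
open Matrix

/-- The `2k×2k` tridiagonal matrix with zero diagonal, superdiagonal entries `1`
and subdiagonal entries `lam`. -/
def Atrid (F : Type*) [Field F] (k : ℕ) (lam : F) : Matrix (Fin (2 * k)) (Fin (2 * k)) F :=
  Matrix.of fun i j =>
    if (j : ℕ) = (i : ℕ) + 1 then (1 : F)
    else if (i : ℕ) = (j : ℕ) + 1 then lam else 0

def Ttri (F : Type*) [Field F] (n : ℕ) (a b : F) : Matrix (Fin n) (Fin n) F :=
  Matrix.of fun i j =>
    if (j : ℕ) = (i : ℕ) + 1 then a
    else if (i : ℕ) = (j : ℕ) + 1 then b else 0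

lemma Ttri_step (F : Type*) [Field F] (n : ℕ) (a b : F) :
    (Ttri F (n + 2) a b).det = -(a * b) * (Ttri F n a b).det := by
  rw [Matrix.det_succ_column_zero]
  rw [Finset.sum_eq_single_of_mem (1 : Fin (n+2)) (Finset.mem_univ _)]
  · have h1 : (Ttri F (n+2) a b) 1 0 = b := by simp [Ttri]
    rw [h1, Matrix.det_succ_row_zero]
    rw [Finset.sum_eq_single_of_mem (0 : Fin (n+1)) (Finset.mem_univ _)]
    · have h2 : (Ttri F (n+2) a b).submatrix (Fin.succAbove 1) Fin.succ 0 0 = a := by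
        simp [Ttri, Fin.succAbove]
      rw [h2]
      have h3 : ((Ttri F (n+2) a b).submatrix (Fin.succAbove 1) Fin.succ).submatrix
          Fin.succ (Fin.succAbove 0) = Ttri F n a b := by
        ext i j
        have hi : (Fin.succAbove (1 : Fin (n+2)) (Fin.succ i) : ℕ) = (i : ℕ) + 2 := by
          rw [Fin.succAbove_of_le_castSucc]
          · simp
          · simp [Fin.le_def]
        simp only [Matrix.submatrix_apply, Ttri, Matrix.of_apply]
        rw [show (Fin.succ (Fin.succAbove (0:Fin (n+1)) j) : Fin (n+2)) = Fin.succ (Fin.succ j) by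
          simp [Fin.succAbove]]
        simp only [hi, Fin.val_succ]
        have hi2 : (i:ℕ) < n := i.isLt
        have hj2 : (j:ℕ) < n := j.isLt
        split_ifs <;> first | rfl | omega
      rw [h3]
      norm_num
      ring
    · intro j _ hj
      have hj' : (j : ℕ) ≠ 0 := fun h => hj (Fin.ext (by simp [h]))
      have e : Fin.succAbove (1:Fin (n+2)) 0 = 0 := by
        simp [Fin.succAbove]
      have : (Ttri F (n+2) a b).submatrix (Fin.succAbove 1) Fin.succ 0 j = 0 := by
        have z : ((0 : Fin (n+2)) : ℕ) = 0 := rfl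
        simp only [Matrix.submatrix_apply, e, Ttri, Matrix.of_apply, z, Fin.val_succ]
        rw [if_neg (by omega), if_neg (by omega)]
      rw [this]; ring
  · intro i _ hi
    have hi' : (i : ℕ) ≠ 1 := fun h => hi (Fin.ext (by simp [h]))
    have : (Ttri F (n+2) a b) i 0 = 0 := by
      have z : ((0 : Fin (n+2)) : ℕ) = 0 := rfl
      simp only [Ttri, Matrix.of_apply, z]
      rw [if_neg (by omega), if_neg (by omega)]
    rw [this]; ring

lemma Ttri_det (F : Type*) [Field F] (k : ℕ) (a b : F) :
    (Ttri F (2 * k) a b).det = (-(a * b)) ^ k := by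
  induction k with
  | zero => simp [Matrix.det_isEmpty]
  | succ k ih =>
      have : (2 * (k + 1)) = (2 * k) + 2 := by ring
      rw [show (Ttri F (2*(k+1)) a b).det = (Ttri F (2*k+2) a b).det from rfl]
      rw [Ttri_step, ih, pow_succ]
      ring

lemma Atrid_eq_Ttri (F : Type*) [Field F] (k : ℕ) (lam : F) :
    Atrid F k lam = Ttri F (2 * k) 1 lam := rfl

lemma Atrid_comb (F : Type*) [Field F] (k : ℕ) (lam x : F) :
    Atrid F k lam + x • (Atrid F k lam)ᵀ = Ttri F (2 * k) (1 + x * lam) (lam + x) := by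
  ext i j
  simp only [Atrid, Ttri, Matrix.add_apply, Matrix.smul_apply, Matrix.transpose_apply,
    Matrix.of_apply, smul_eq_mul]
  split_ifs <;> first | ring1 | omega

/-- reversal-scaling matrix -/
def revS (F : Type*) [Field F] (k : ℕ) (c : F) : Matrix (Fin (2 * k)) (Fin (2 * k)) F :=
  Matrix.of fun i j => if i = Fin.rev j then (if Even (j : ℕ) then 1 else c) else 0

lemma mul_revS (F : Type*) [Field F] (k : ℕ) (c : F)
    (M : Matrix (Fin (2 * k)) (Fin (2 * k)) F) (i j : Fin (2 * k)) :
    (M * revS F k c) i j = M i (Fin.rev j) * (if Even (j : ℕ) then 1 else c) := by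
  simp [Matrix.mul_apply, revS, mul_ite, mul_zero, Finset.sum_ite_eq, Finset.sum_ite_eq']

lemma revS_transpose_mul (F : Type*) [Field F] (k : ℕ) (c : F)
    (N : Matrix (Fin (2 * k)) (Fin (2 * k)) F) (i j : Fin (2 * k)) :
    ((revS F k c)ᵀ * N) i j = (if Even (i : ℕ) then 1 else c) * N (Fin.rev i) j := by
  simp [Matrix.mul_apply, revS, Matrix.transpose_apply, ite_mul, zero_mul,
    Finset.sum_ite_eq, Finset.sum_ite_eq']

lemma revS_conj (F : Type*) [Field F] (k : ℕ) (lam : F) (hlam : lam ≠ 0) :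
    (revS F k lam⁻¹)ᵀ * Atrid F k lam * revS F k lam⁻¹ = Atrid F k lam⁻¹ := by
  ext i j
  rw [Matrix.mul_assoc, revS_transpose_mul, mul_revS]
  have hi := i.isLt
  have hj := j.isLt
  simp only [Atrid, Matrix.of_apply, Fin.val_rev]
  have e1 : (2*k - ((j:ℕ)+1) = 2*k - ((i:ℕ)+1) + 1) ↔ ((i:ℕ) = (j:ℕ)+1) := by omega
  have e2 : (2*k - ((i:ℕ)+1) = 2*k - ((j:ℕ)+1) + 1) ↔ ((j:ℕ) = (i:ℕ)+1) := by omega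
  simp only [e1, e2]
  by_cases h1 : (i:ℕ) = (j:ℕ)+1
  · have h2 : ¬ ((j:ℕ) = (i:ℕ)+1) := by omega
    simp only [if_pos h1, if_neg h2]
    have hpar : Even (i:ℕ) ↔ ¬ Even (j:ℕ) := by rw [h1]; exact Nat.even_add_one
    by_cases he : Even (j:ℕ) <;> simp [he, hpar]
  · by_cases h2 : (j:ℕ) = (i:ℕ)+1
    · simp only [if_neg h1, if_pos h2]
      have hpar : Even (j:ℕ) ↔ ¬ Even (i:ℕ) := by rw [h2]; exact Nat.even_add_one
      by_cases he : Even (i:ℕ) <;>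
        simp [he, hpar, mul_inv_cancel₀ hlam, inv_mul_cancel₀ hlam]
    · simp only [if_neg h1, if_neg h2]
      ring

lemma revS_isUnit (F : Type*) [Field F] (k : ℕ) (lam : F) (hlam : lam ≠ 0) :
    IsUnit (revS F k lam⁻¹) := by
  have h := congrArg Matrix.det (revS_conj F k lam hlam)
  rw [Matrix.det_mul, Matrix.det_mul, Matrix.det_transpose,
    Atrid_eq_Ttri, Atrid_eq_Ttri, Ttri_det, Ttri_det] at h
  have hne : ((-(1 * lam⁻¹)) ^ k : F) ≠ 0 :=
    pow_ne_zero _ (by simp [inv_ne_zero hlam])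
  rw [← h] at hne
  rw [Matrix.isUnit_iff_isUnit_det, isUnit_iff_ne_zero]
  intro h0
  rw [h0] at hne
  simp at hne

/-- For `λ, μ ≠ ±1`, the matrices `A_λ` and `A_μ` are congruent iff `μ = λ` or
`μ = λ⁻¹` (with `0⁻¹ = 0`, so for `λ = 0` congruence holds only when `μ = 0`). -/
theorem stmt_11 (F : Type*) [Field F] [IsAlgClosed F] (hchar : ringChar F ≠ 2)
    (k : ℕ) (hk : 0 < k) (lam mu : F)
    (hl1 : lam ≠ 1) (hl2 : lam ≠ -1) (hm1 : mu ≠ 1) (hm2 : mu ≠ -1) :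
    (∃ S : Matrix (Fin (2 * k)) (Fin (2 * k)) F,
        IsUnit S ∧ Sᵀ * Atrid F k lam * S = Atrid F k mu) ↔
      (mu = lam ∨ mu = lam⁻¹) := by
  constructor
  · rintro ⟨S, hS, hcong⟩
    have hT : Sᵀ * (Atrid F k lam)ᵀ * S = (Atrid F k mu)ᵀ := by
      have h := congrArg Matrix.transpose hcong
      rw [Matrix.transpose_mul, Matrix.transpose_mul, Matrix.transpose_transpose] at h
      rw [← Matrix.mul_assoc] at h
      exact h
    have key : ∀ x : F, (-((1 + x*mu)*(mu + x)))^k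
        = S.det^2 * (-((1 + x*lam)*(lam + x)))^k := by
      intro x
      have h2 : Sᵀ * (Ttri F (2*k) (1 + x*lam) (lam + x)) * S
          = Ttri F (2*k) (1 + x*mu) (mu + x) := by
        rw [← Atrid_comb, ← Atrid_comb, Matrix.mul_add, Matrix.add_mul, hcong]
        congr 1
        rw [Matrix.mul_smul, Matrix.smul_mul, hT]
      have h3 := congrArg Matrix.det h2
      rw [Matrix.det_mul, Matrix.det_mul, Matrix.det_transpose, Ttri_det, Ttri_det] at h3
      rw [← h3]; ring
    have h0 := key (-lam)
    have hz : (1 + (-lam)*lam) * (lam + -lam) = 0 := by ring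
    rw [hz, neg_zero, zero_pow hk.ne', mul_zero] at h0
    have h1 : (1 + -lam*mu) * (mu + -lam) = 0 := by
      exact neg_eq_zero.mp (pow_eq_zero_iff hk.ne' |>.mp h0)
    rcases mul_eq_zero.mp h1 with h | h
    · right
      have hml : lam * mu = 1 := by linear_combination -h
      exact (inv_eq_of_mul_eq_one_right hml).symm
    · left; linear_combination h
  · rintro (h | h)
    · subst h
      exact ⟨1, isUnit_one, by simp⟩
    · by_cases hlam : lam = 0
      · subst hlam
        rw [h, _root_.inv_zero]
        exact ⟨1, isUnit_one, by simp⟩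
      · subst h
        exact ⟨revS F k lam⁻¹, revS_isUnit F k lam hlam, revS_conj F k lam hlam⟩
end

section
/- Let F be an algebraically closed field of characteristic different from 2, n = 2k+1 odd, let X be the n×n symmetric tridiagonal matrix with zero diagonal and off-diagonal entries (1, 0, 1, 0, …) (both super- and subdiagonal), and let Y be the n×n symmetric tridiagonal matrix with zero diagonal and off-diagonal entries (0, 1, 0, 1, …). Then the pair (X, Y) is equivalent to (F_k, G_k) ⊕ (F_kᵀ, G_kᵀ), where F_k = [I_k | 0] and G_k = [0 | I_k] are k×(k+1). -/
open Matrix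

/-- The row permutation: `i < k ↦ 2i+1`, `i ≥ k ↦ 2(i-k)`. -/
def sigmaEquiv (k : ℕ) : Equiv.Perm (Fin (2 * k + 1)) where
  toFun i := ⟨if i.val < k then 2 * i.val + 1 else 2 * (i.val - k),
    by have := i.isLt; split <;> omega⟩
  invFun p := ⟨if p.val % 2 = 0 then p.val / 2 + k else p.val / 2,
    by have := p.isLt; split <;> omega⟩
  left_inv i := by
    have := i.isLt
    apply Fin.ext
    simp only []
    split <;> split <;> omega
  right_inv p := by
    have := p.isLt
    apply Fin.ext
    simp only []
    split <;> split <;> omega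

/-- The (inverse of the) column permutation: columns `j ≤ k ↦ 2j`, `j > k ↦ 2(j-k)-1`;
here we give it as an `Equiv` whose `symm` is that map. -/
def tauEquiv (k : ℕ) : Equiv.Perm (Fin (2 * k + 1)) where
  toFun q := ⟨if q.val % 2 = 0 then q.val / 2 else q.val / 2 + k + 1,
    by have := q.isLt; split <;> omega⟩
  invFun j := ⟨if j.val ≤ k then 2 * j.val else 2 * (j.val - k) - 1,
    by have := j.isLt; split <;> omega⟩
  left_inv q := by
    have := q.isLt
    apply Fin.ext
    simp only []
    split <;> split <;> omega
  right_inv j := by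
    have := j.isLt
    apply Fin.ext
    simp only []
    split <;> split <;> omega

/-- For `n = 2k+1`, the pair of symmetric tridiagonal matrices with zero diagonal
and off-diagonal entries `(1,0,1,0,…)` resp. `(0,1,0,1,…)` is equivalent to
`(F_k, G_k) ⊕ (F_kᵀ, G_kᵀ)`. -/
theorem stmt_13 (F : Type*) [Field F] [IsAlgClosed F] (hchar : ringChar F ≠ 2)
    (k : ℕ) (hk : 0 < k) :
    PairEquiv
      -- X: off-diagonal (1,0,1,0,…)
      (Matrix.of fun i j : Fin (2 * k + 1) =>
        if (j : ℕ) = (i : ℕ) + 1 then (if (i : ℕ) % 2 = 0 then (1 : F) else 0)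
        else if (i : ℕ) = (j : ℕ) + 1 then (if (j : ℕ) % 2 = 0 then 1 else 0)
        else 0)
      -- Y: off-diagonal (0,1,0,1,…)
      (Matrix.of fun i j : Fin (2 * k + 1) =>
        if (j : ℕ) = (i : ℕ) + 1 then (if (i : ℕ) % 2 = 1 then (1 : F) else 0)
        else if (i : ℕ) = (j : ℕ) + 1 then (if (j : ℕ) % 2 = 1 then 1 else 0)
        else 0)
      -- F_k ⊕ F_kᵀ
      (Matrix.of fun i j : Fin (2 * k + 1) =>
        if ((i : ℕ) = j ∧ (i : ℕ) < k) ∨ ((j : ℕ) = (i : ℕ) + 1 ∧ k ≤ (i : ℕ)) then (1 : F)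
        else 0)
      -- G_k ⊕ G_kᵀ
      (Matrix.of fun i j : Fin (2 * k + 1) =>
        if ((j : ℕ) = (i : ℕ) + 1 ∧ (i : ℕ) < k) ∨ ((i : ℕ) = j ∧ k + 1 ≤ (j : ℕ)) then (1 : F)
        else 0) := by
  refine ⟨(sigmaEquiv k).toPEquiv.toMatrix, (tauEquiv k).toPEquiv.toMatrix, ?_, ?_, ?_, ?_⟩
  · exact ⟨⟨(sigmaEquiv k).toPEquiv.toMatrix, ((sigmaEquiv k).symm.toPEquiv.toMatrix : Matrix _ _ F),
      by rw [← PEquiv.toMatrix_trans, ← Equiv.toPEquiv_trans, Equiv.self_trans_symm,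
        Equiv.toPEquiv_refl, PEquiv.toMatrix_refl],
      by rw [← PEquiv.toMatrix_trans, ← Equiv.toPEquiv_trans, Equiv.symm_trans_self,
        Equiv.toPEquiv_refl, PEquiv.toMatrix_refl]⟩, rfl⟩
  · exact ⟨⟨(tauEquiv k).toPEquiv.toMatrix, ((tauEquiv k).symm.toPEquiv.toMatrix : Matrix _ _ F),
      by rw [← PEquiv.toMatrix_trans, ← Equiv.toPEquiv_trans, Equiv.self_trans_symm,
        Equiv.toPEquiv_refl, PEquiv.toMatrix_refl],
      by rw [← PEquiv.toMatrix_trans, ← Equiv.toPEquiv_trans, Equiv.symm_trans_self,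
        Equiv.toPEquiv_refl, PEquiv.toMatrix_refl]⟩, rfl⟩
  · rw [PEquiv.toMatrix_toPEquiv_mul, PEquiv.mul_toMatrix_toPEquiv]
    ext i j
    have hi := i.isLt
    have hj := j.isLt
    simp only [submatrix_apply, of_apply, sigmaEquiv, tauEquiv, Equiv.symm,
      Equiv.coe_fn_mk, id]
    split_ifs <;> first | rfl | omega
  · rw [PEquiv.toMatrix_toPEquiv_mul, PEquiv.mul_toMatrix_toPEquiv]
    ext i j
    have hi := i.isLt
    have hj := j.isLt
    simp only [submatrix_apply, of_apply, sigmaEquiv, tauEquiv, Equiv.symm,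
      Equiv.coe_fn_mk, id]
    split_ifs <;> first | rfl | omega
end

section
/- Let F be an algebraically closed field of characteristic different from 2, λ ∈ F, and n = 2k even. Let X be the n×n symmetric tridiagonal matrix with zero diagonal and off-diagonal entries alternating (1,0,1,0,…), and let Y be the symmetric tridiagonal matrix with diagonal (1, 0, …, 0), superdiagonal and subdiagonal entries alternating (λ, 1, λ, 1, …). Then the pair (X, Y) is equivalent to (I_n, J_n(λ)). -/
/-!
`X = M⁺_k` pairs the index `2m` with `2m + 1`, so reordering the rows by `τ` and the
columns by `σ` turns `X` into `I` as soon as `σ t` is the partner of `τ t`. Take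
`τ = (n - 2, n - 4, …, 0, 1, 3, …, n - 1)`, which walks the path `0 — 1 — ⋯ — (n - 1)`
underlying the tridiagonal `Y` with a turn at `0`. Then `Y (τ t) (σ t)` is a pairing edge, of
weight `λ`, and `Y (τ t) (σ (t + 1))` is the other edge at `τ t`, of weight `1`, except at the
turn, where `τ t = 0 = σ (t + 1)` and it is the diagonal entry `1` of `Y`. So the reordered pair
is `(I, J_n(λ))`, and the reordering is realised by permutation matrices.
-/

open Matrix

/-- The `n×n` Jordan block `J_n(λ)`. -/
def Jmat (F : Type*) [Field F] (n : ℕ) (lam : F) : Matrix (Fin n) (Fin n) F :=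
  Matrix.of fun i j => if i = j then lam else if (j : ℕ) = (i : ℕ) + 1 then 1 else 0

theorem PairEquiv.of_submatrix_eq_one {F : Type*} [Field F] {n : ℕ}
    {A B : Matrix (Fin n) (Fin n) F} (r c : Fin n → Fin n) (hA : A.submatrix r c = 1) :
    PairEquiv A B 1 (B.submatrix r c) := by
  have hRS : ∀ M : Matrix (Fin n) (Fin n) F,
      (1 : Matrix (Fin n) (Fin n) F).submatrix r id * M *
        (1 : Matrix (Fin n) (Fin n) F).submatrix id c = M.submatrix r c := fun M => by
    ext i j
    simp [mul_apply, one_apply]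
  have hA' := (hRS A).trans hA
  exact ⟨_, _, IsUnit.of_mul_eq_one _ (by rwa [Matrix.mul_assoc] at hA'),
    IsUnit.of_mul_eq_one_right _ hA', hA', hRS B⟩

/-- `M⁺_k`: the block-diagonal sum of `k` copies of `[[0,1],[1,0]]`. -/
def Mplus (F : Type*) [Field F] (k : ℕ) : Matrix (Fin (2 * k)) (Fin (2 * k)) F :=
  Matrix.of fun i j : Fin (2 * k) =>
    if (j : ℕ) = (i : ℕ) + 1 then (if (i : ℕ) % 2 = 0 then (1 : F) else 0)
    else if (i : ℕ) = (j : ℕ) + 1 then (if (j : ℕ) % 2 = 0 then 1 else 0)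
    else 0

/-- The paper's `Y = λ M⁺_k + (I₁ ⊕ M⁺_{k-1} ⊕ 0₁)`. -/
def MplusPencil (F : Type*) [Field F] (k : ℕ) (lam : F) : Matrix (Fin (2 * k)) (Fin (2 * k)) F :=
  Matrix.of fun i j : Fin (2 * k) =>
    if i = j then (if (i : ℕ) = 0 then (1 : F) else 0)
    else if (j : ℕ) = (i : ℕ) + 1 then (if (i : ℕ) % 2 = 0 then lam else 1)
    else if (i : ℕ) = (j : ℕ) + 1 then (if (j : ℕ) % 2 = 0 then lam else 1)
    else 0

def jordanRowOrder (k : ℕ) (t : Fin (2 * k)) : Fin (2 * k) :=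
  ⟨if (t : ℕ) < k then 2 * (k - 1 - t) else 2 * (t - k) + 1, by split_ifs <;> omega⟩

def jordanColOrder (k : ℕ) (t : Fin (2 * k)) : Fin (2 * k) :=
  ⟨if (t : ℕ) < k then 2 * k - 1 - 2 * t else 2 * (t - k), by split_ifs <;> omega⟩

theorem Mplus_submatrix_jordanOrder (F : Type*) [Field F] (k : ℕ) :
    (Mplus F k).submatrix (jordanRowOrder k) (jordanColOrder k) = 1 := by
  ext i j
  simp only [Mplus, jordanRowOrder, jordanColOrder, submatrix_apply, of_apply, one_apply,
    Fin.ext_iff]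
  split_ifs <;> first | rfl | (exfalso; omega)

theorem MplusPencil_submatrix_jordanOrder (F : Type*) [Field F] (k : ℕ) (lam : F) :
    (MplusPencil F k lam).submatrix (jordanRowOrder k) (jordanColOrder k) = Jmat F (2 * k) lam := by
  ext i j
  simp only [MplusPencil, Jmat, jordanRowOrder, jordanColOrder, submatrix_apply, of_apply,
    Fin.ext_iff]
  split_ifs <;> first | rfl | (exfalso; omega)

theorem stmt_14_general (F : Type*) [Field F]
    (k : ℕ) (lam : F) :
    PairEquiv
      (Matrix.of fun i j : Fin (2 * k) =>
        if (j : ℕ) = (i : ℕ) + 1 then (if (i : ℕ) % 2 = 0 then (1 : F) else 0)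
        else if (i : ℕ) = (j : ℕ) + 1 then (if (j : ℕ) % 2 = 0 then 1 else 0)
        else 0)
      (Matrix.of fun i j : Fin (2 * k) =>
        if i = j then (if (i : ℕ) = 0 then (1 : F) else 0)
        else if (j : ℕ) = (i : ℕ) + 1 then (if (i : ℕ) % 2 = 0 then lam else 1)
        else if (i : ℕ) = (j : ℕ) + 1 then (if (j : ℕ) % 2 = 0 then lam else 1)
        else 0)
      (1 : Matrix (Fin (2 * k)) (Fin (2 * k)) F)
      (Jmat F (2 * k) lam) := by
  rw [← MplusPencil_submatrix_jordanOrder]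
  exact PairEquiv.of_submatrix_eq_one _ _ (Mplus_submatrix_jordanOrder F k)

/-- For `n = 2k`, the pair `(X, Y)` with `X` symmetric tridiagonal with zero
diagonal and off-diagonal `(1,0,1,0,…)` and `Y` symmetric tridiagonal with
diagonal `(1,0,…,0)` and off-diagonal `(λ,1,λ,1,…)` is equivalent to
`(I_n, J_n(λ))`. -/
theorem stmt_14 (F : Type*) [Field F] [IsAlgClosed F] (hchar : ringChar F ≠ 2)
    (k : ℕ) (hk : 0 < k) (lam : F) :
    PairEquiv
      (Matrix.of fun i j : Fin (2 * k) =>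
        if (j : ℕ) = (i : ℕ) + 1 then (if (i : ℕ) % 2 = 0 then (1 : F) else 0)
        else if (i : ℕ) = (j : ℕ) + 1 then (if (j : ℕ) % 2 = 0 then 1 else 0)
        else 0)
      (Matrix.of fun i j : Fin (2 * k) =>
        if i = j then (if (i : ℕ) = 0 then (1 : F) else 0)
        else if (j : ℕ) = (i : ℕ) + 1 then (if (i : ℕ) % 2 = 0 then lam else 1)
        else if (i : ℕ) = (j : ℕ) + 1 then (if (j : ℕ) % 2 = 0 then lam else 1)
        else 0)
      (1 : Matrix (Fin (2 * k)) (Fin (2 * k)) F)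
      (Jmat F (2 * k) lam) :=
  stmt_14_general F k lam
end

section
/- Let F be an algebraically closed field of characteristic different from 2, λ ∈ F, and k a positive integer. Let A be the 2k×2k skew-symmetric tridiagonal matrix with off-diagonal pattern: superdiagonal (1, 0, 1, 0, …), subdiagonal (-1, 0, -1, 0, …); and let B be the 2k×2k skew-symmetric tridiagonal matrix with superdiagonal (λ, 1, λ, 1, …) and subdiagonal (-λ, -1, -λ, -1, …). Then the pair (A, B) is equivalent to (I_k, J_k(λ)) ⊕ (I_k, J_k(λ)). -/
/-!
Both matrices of the pair are sums of `2 × 2` blocks `[[0, 1], [-1, 0]]`: `A` is the block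
diagonal matrix `M⁻_k`, and `B = λ A + C` with `C = 0₁ ⊕ M⁻_{k-1} ⊕ 0₁`. Reading the odd rows
against the even columns of `A`, and the even rows against the odd columns in reverse order,
turns `A` into the identity and `C` into the nilpotent part of `J_k(λ) ⊕ J_k(λ)`, once rows and
columns are given alternating signs. So a single pair of signed permutation matrices works.
-/

open Matrix

namespace Matrix

def monomial {m n α : Type*} [DecidableEq n] [Zero α] (σ : m → n) (r : m → α) :
    Matrix m n α :=
  of fun i p => if p = σ i then r i else 0

theorem monomial_mul_mul_transpose_monomial_apply {l m n α : Type*} [Fintype n]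
    [DecidableEq n] [Semiring α] (σ : l → n) (τ : m → n) (r : l → α) (s : m → α)
    (M : Matrix n n α) (i : l) (j : m) :
    (monomial σ r * M * (monomial τ s)ᵀ) i j = r i * M (σ i) (τ j) * s j := by
  simp [monomial, mul_apply, ite_mul, mul_ite]

end Matrix

namespace SkewPencil

variable {R : Type*} [CommRing R] (k : ℕ)

/-- The block diagonal matrix `M⁻_k`. -/
def skewBlockDiag : Matrix (Fin (2 * k)) (Fin (2 * k)) R :=
  of fun i j =>
    if (j : ℕ) = i + 1 then (if (i : ℕ) % 2 = 0 then 1 else 0)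
    else if (i : ℕ) = j + 1 then (if (j : ℕ) % 2 = 0 then -1 else 0)
    else 0

/-- The matrix `0₁ ⊕ M⁻_{k-1} ⊕ 0₁`. -/
def skewBlockDiagShift : Matrix (Fin (2 * k)) (Fin (2 * k)) R :=
  of fun i j =>
    if (j : ℕ) = i + 1 then (if (i : ℕ) % 2 = 0 then 0 else 1)
    else if (i : ℕ) = j + 1 then (if (j : ℕ) % 2 = 0 then 0 else -1)
    else 0

def skewTridiag (lam : R) : Matrix (Fin (2 * k)) (Fin (2 * k)) R :=
  of fun i j =>
    if (j : ℕ) = i + 1 then (if (i : ℕ) % 2 = 0 then lam else 1)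
    else if (i : ℕ) = j + 1 then (if (j : ℕ) % 2 = 0 then -lam else -1)
    else 0

def jordanNilpotent : Matrix (Fin (2 * k)) (Fin (2 * k)) R :=
  of fun i j => if (j : ℕ) = i + 1 ∧ (j : ℕ) ≠ k then 1 else 0

/-- `J_k(λ) ⊕ J_k(λ)`. -/
def jordanPair (lam : R) : Matrix (Fin (2 * k)) (Fin (2 * k)) R :=
  of fun i j => if i = j then lam else if (j : ℕ) = i + 1 ∧ (j : ℕ) ≠ k then 1 else 0

theorem skewTridiag_eq (lam : R) :
    skewTridiag k lam = lam • skewBlockDiag k + skewBlockDiagShift k := by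
  ext i j
  simp only [skewTridiag, skewBlockDiag, skewBlockDiagShift, Matrix.add_apply, Matrix.smul_apply, of_apply,
    smul_eq_mul]
  split_ifs <;> ring

theorem jordanPair_eq (lam : R) : jordanPair k lam = lam • 1 + jordanNilpotent k := by
  ext i j
  by_cases hij : i = j
  · subst hij
    simp [jordanPair, jordanNilpotent]
  · simp [jordanPair, jordanNilpotent, hij]

def rowIndex (i : Fin (2 * k)) : Fin (2 * k) :=
  if h : (i : ℕ) < k then ⟨2 * i + 1, by omega⟩ else ⟨4 * k - 2 - 2 * i, by omega⟩

def colIndex (j : Fin (2 * k)) : Fin (2 * k) :=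
  if h : (j : ℕ) < k then ⟨2 * j, by omega⟩ else ⟨4 * k - 1 - 2 * j, by omega⟩

def rowSign (i : Fin (2 * k)) : R :=
  if (i : ℕ) < k then (-1) ^ ((i : ℕ) + 1) else (-1) ^ ((i : ℕ) - k)

def colSign (j : Fin (2 * k)) : R :=
  if (j : ℕ) < k then (-1) ^ (j : ℕ) else (-1) ^ ((j : ℕ) - k)

abbrev rowTransform : Matrix (Fin (2 * k)) (Fin (2 * k)) R :=
  monomial (rowIndex k) (rowSign k)

abbrev colTransform : Matrix (Fin (2 * k)) (Fin (2 * k)) R :=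
  (monomial (colIndex k) (colSign k))ᵀ

theorem rowTransform_mul_skewBlockDiag_mul_colTransform :
    rowTransform k * skewBlockDiag k * colTransform k = (1 : Matrix _ _ R) := by
  ext ⟨i, hi⟩ ⟨j, hj⟩
  rw [monomial_mul_mul_transpose_monomial_apply]
  by_cases hik : i < k <;> by_cases hjk : j < k <;>
    simp only [skewBlockDiag, rowIndex, colIndex, rowSign, colSign, of_apply, one_apply,
      Fin.mk.injEq, hik, hjk, dite_true, dite_false, if_true, if_false, neg_one_pow_eq_ite,
      Nat.even_iff] <;>
    split_ifs <;> first | omega | ring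

theorem rowTransform_mul_skewBlockDiagShift_mul_colTransform :
    rowTransform k * skewBlockDiagShift k * colTransform k =
      (jordanNilpotent k : Matrix _ _ R) := by
  ext ⟨i, hi⟩ ⟨j, hj⟩
  rw [monomial_mul_mul_transpose_monomial_apply]
  by_cases hik : i < k <;> by_cases hjk : j < k <;>
    simp only [skewBlockDiagShift, jordanNilpotent, rowIndex, colIndex, rowSign, colSign,
      of_apply, hik, hjk, dite_true, dite_false, if_true, if_false, neg_one_pow_eq_ite,
      Nat.even_iff] <;>
    split_ifs <;> first | omega | ring

theorem rowTransform_mul_skewTridiag_mul_colTransform (lam : R) :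
    rowTransform k * skewTridiag k lam * colTransform k = jordanPair k lam := by
  rw [skewTridiag_eq, mul_add, add_mul, Matrix.mul_smul, Matrix.smul_mul,
    rowTransform_mul_skewBlockDiag_mul_colTransform,
    rowTransform_mul_skewBlockDiagShift_mul_colTransform, jordanPair_eq]

end SkewPencil

open SkewPencil in
theorem stmt_16_general (F : Type*) [Field F]
    (k : ℕ) (lam : F) :
    PairEquiv
      (Matrix.of fun i j : Fin (2 * k) =>
        if (j : ℕ) = (i : ℕ) + 1 then (if (i : ℕ) % 2 = 0 then (1 : F) else 0)
        else if (i : ℕ) = (j : ℕ) + 1 then (if (j : ℕ) % 2 = 0 then -1 else 0)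
        else 0)
      (Matrix.of fun i j : Fin (2 * k) =>
        if (j : ℕ) = (i : ℕ) + 1 then (if (i : ℕ) % 2 = 0 then lam else 1)
        else if (i : ℕ) = (j : ℕ) + 1 then (if (j : ℕ) % 2 = 0 then -lam else -1)
        else 0)
      (1 : Matrix (Fin (2 * k)) (Fin (2 * k)) F)
      -- J_k(λ) ⊕ J_k(λ)
      (Matrix.of fun i j : Fin (2 * k) =>
        if i = j then lam
        else if (j : ℕ) = (i : ℕ) + 1 ∧ (j : ℕ) ≠ k then 1 else 0) := by
  have hA := rowTransform_mul_skewBlockDiag_mul_colTransform (R := F) k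
  refine ⟨rowTransform k, colTransform k, ?_, ?_, hA,
    rowTransform_mul_skewTridiag_mul_colTransform k lam⟩
  · exact IsUnit.of_mul_eq_one _ (by rwa [← mul_assoc])
  · exact IsUnit.of_mul_eq_one_right _ hA

/-- The pair `(A, B)` of `2k×2k` skew-symmetric tridiagonal matrices, where `A`
has superdiagonal `(1,0,1,0,…)` and subdiagonal `(-1,0,-1,0,…)`, and `B` has
superdiagonal `(λ,1,λ,1,…)` and subdiagonal `(-λ,-1,-λ,-1,…)`, is equivalent to
`(I_k, J_k(λ)) ⊕ (I_k, J_k(λ))`. -/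
theorem stmt_16 (F : Type*) [Field F] [IsAlgClosed F] (hchar : ringChar F ≠ 2)
    (k : ℕ) (hk : 0 < k) (lam : F) :
    PairEquiv
      (Matrix.of fun i j : Fin (2 * k) =>
        if (j : ℕ) = (i : ℕ) + 1 then (if (i : ℕ) % 2 = 0 then (1 : F) else 0)
        else if (i : ℕ) = (j : ℕ) + 1 then (if (j : ℕ) % 2 = 0 then -1 else 0)
        else 0)
      (Matrix.of fun i j : Fin (2 * k) =>
        if (j : ℕ) = (i : ℕ) + 1 then (if (i : ℕ) % 2 = 0 then lam else 1)
        else if (i : ℕ) = (j : ℕ) + 1 then (if (j : ℕ) % 2 = 0 then -lam else -1)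
        else 0)
      (1 : Matrix (Fin (2 * k)) (Fin (2 * k)) F)
      -- J_k(λ) ⊕ J_k(λ)
      (Matrix.of fun i j : Fin (2 * k) =>
        if i = j then lam
        else if (j : ℕ) = (i : ℕ) + 1 ∧ (j : ℕ) ≠ k then 1 else 0) :=
  stmt_16_general F k lam
end

section
/- Let F be an algebraically closed field with nonidentity involution, with fixed field P and i ∈ F satisfying i² = -1, ī = -i. Let a, b ∈ P with a² + b² = 1, let A be the n×n Hermitian tridiagonal matrix with diagonal (a, 0, 0, …, 0), superdiagonal (b·i, a, b·i, a, …), and subdiagonal (-b·i, a, -b·i, a, …); and let B be the n×n Hermitian tridiagonal matrix with diagonal (b, 0, 0, …, 0), superdiagonal (-a·i, b, -a·i, b, …), and subdiagonal (a·i, b, a·i, b, …). Then (A, B) is *congruent to the pair (A', B') where A' is the real tridiagonal matrix with diagonal (a, 0, …, 0) and off-diagonal entries alternating (b, a, b, a, …) (symmetric), and B' has diagonal (b, 0, …, 0) and symmetric off-diagonal entries alternating (-a, b, -a, b, …). Specifically, S*·A·S = A' and S*·B·S = B' for S = diag(1, -i, -i, -1, -1, i, i, 1, 1, -i, -i, -1,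 -1, …). -/
open Matrix

/-- The conjugate transpose of `A` with respect to the involution `σ`. -/
def starMat {F : Type*} [Field F] {n : ℕ} (σ : F ≃+* F)
    (A : Matrix (Fin n) (Fin n) F) : Matrix (Fin n) (Fin n) F :=
  (A.map σ)ᵀ

/-- The diagonal entries of `S`: the period-8 pattern `1, -i, -i, -1, -1, i, i, 1`. -/
def diagEntry {F : Type*} [Field F] (i : F) (m : ℕ) : F :=
  match m % 8 with
  | 0 => 1
  | 1 => -i
  | 2 => -i
  | 3 => -1
  | 4 => -1
  | 5 => i
  | 6 => i
  | _ => 1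

lemma diag_ne_zero {F : Type*} [Field F] {i : F} (hi0 : i ≠ 0) (m : ℕ) :
    diagEntry i m ≠ 0 := by
  have h8 : m % 8 = 0 ∨ m % 8 = 1 ∨ m % 8 = 2 ∨ m % 8 = 3 ∨ m % 8 = 4 ∨ m % 8 = 5 ∨
      m % 8 = 6 ∨ m % 8 = 7 := by omega
  rcases h8 with h|h|h|h|h|h|h|h <;> simp [diagEntry, h, hi0]

lemma key0 {F : Type*} [Field F] (σ : F ≃+* F) {i : F} (hi : i ^ 2 = -1)
    (hsi : σ i = -i) (m : ℕ) : σ (diagEntry i m) * diagEntry i m = 1 := by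
  have h8 : m % 8 = 0 ∨ m % 8 = 1 ∨ m % 8 = 2 ∨ m % 8 = 3 ∨ m % 8 = 4 ∨ m % 8 = 5 ∨
      m % 8 = 6 ∨ m % 8 = 7 := by omega
  rcases h8 with h|h|h|h|h|h|h|h <;>
    simp only [diagEntry, h, map_neg, _root_.map_one, hsi, neg_neg] <;>
    simp [← sq, hi]

lemma key1 {F : Type*} [Field F] (σ : F ≃+* F) {i : F} (hi : i ^ 2 = -1)
    (hsi : σ i = -i) (m : ℕ) :
    σ (diagEntry i m) * diagEntry i (m + 1) = if m % 2 = 0 then -i else 1 := by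
  have h8 : m % 8 = 0 ∨ m % 8 = 1 ∨ m % 8 = 2 ∨ m % 8 = 3 ∨ m % 8 = 4 ∨ m % 8 = 5 ∨
      m % 8 = 6 ∨ m % 8 = 7 := by omega
  rcases h8 with h|h|h|h|h|h|h|h <;>
    [ (have h' : (m+1) % 8 = 1 := by omega); (have h' : (m+1) % 8 = 2 := by omega);
      (have h' : (m+1) % 8 = 3 := by omega); (have h' : (m+1) % 8 = 4 := by omega);
      (have h' : (m+1) % 8 = 5 := by omega); (have h' : (m+1) % 8 = 6 := by omega);
      (have h' : (m+1) % 8 = 7 := by omega); (have h' : (m+1) % 8 = 0 := by omega)] <;>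
    [ (have h2 : m % 2 = 0 := by omega); (have h2 : m % 2 = 1 := by omega);
      (have h2 : m % 2 = 0 := by omega); (have h2 : m % 2 = 1 := by omega);
      (have h2 : m % 2 = 0 := by omega); (have h2 : m % 2 = 1 := by omega);
      (have h2 : m % 2 = 0 := by omega); (have h2 : m % 2 = 1 := by omega)] <;>
    simp only [diagEntry, h, h', h2, map_neg, _root_.map_one, hsi, neg_neg] <;>
    simp [← sq, hi]

lemma key2 {F : Type*} [Field F] (σ : F ≃+* F) {i : F} (hi : i ^ 2 = -1)
    (hsi : σ i = -i) (m : ℕ) :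
    σ (diagEntry i (m + 1)) * diagEntry i m = if m % 2 = 0 then i else 1 := by
  have h8 : m % 8 = 0 ∨ m % 8 = 1 ∨ m % 8 = 2 ∨ m % 8 = 3 ∨ m % 8 = 4 ∨ m % 8 = 5 ∨
      m % 8 = 6 ∨ m % 8 = 7 := by omega
  rcases h8 with h|h|h|h|h|h|h|h <;>
    [ (have h' : (m+1) % 8 = 1 := by omega); (have h' : (m+1) % 8 = 2 := by omega);
      (have h' : (m+1) % 8 = 3 := by omega); (have h' : (m+1) % 8 = 4 := by omega);
      (have h' : (m+1) % 8 = 5 := by omega); (have h' : (m+1) % 8 = 6 := by omega);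
      (have h' : (m+1) % 8 = 7 := by omega); (have h' : (m+1) % 8 = 0 := by omega)] <;>
    [ (have h2 : m % 2 = 0 := by omega); (have h2 : m % 2 = 1 := by omega);
      (have h2 : m % 2 = 0 := by omega); (have h2 : m % 2 = 1 := by omega);
      (have h2 : m % 2 = 0 := by omega); (have h2 : m % 2 = 1 := by omega);
      (have h2 : m % 2 = 0 := by omega); (have h2 : m % 2 = 1 := by omega)] <;>
    simp only [diagEntry, h, h', h2, map_neg, _root_.map_one, hsi, neg_neg] <;>
    simp [← sq, hi]

/-- The pair of Hermitian tridiagonal matrices obtained from the Cartesian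
decomposition of `μ·(type (1.7))`, with `μ = a + b·i`, `a² + b² = 1`, is
*congruent, via `S = diag(1, -i, -i, -1, -1, i, i, 1, 1, -i, …)`, to the pair
of real symmetric tridiagonal matrices `(A', B')` of type (7.2). -/
theorem stmt_18 (F : Type*) [Field F] [IsAlgClosed F] (σ : F ≃+* F)
    (hinv : ∀ x, σ (σ x) = x) (hne : ∃ x, σ x ≠ x)
    (i : F) (hi : i ^ 2 = -1) (hsi : σ i = -i)
    (a b : F) (ha : σ a = a) (hb : σ b = b) (hab : a ^ 2 + b ^ 2 = 1) (n : ℕ) :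
    let S : Matrix (Fin n) (Fin n) F := Matrix.diagonal fun m => diagEntry i (m : ℕ)
    let A : Matrix (Fin n) (Fin n) F := Matrix.of fun p q =>
      if p = q then (if (p : ℕ) = 0 then a else 0)
      else if (q : ℕ) = (p : ℕ) + 1 then (if (p : ℕ) % 2 = 0 then b * i else a)
      else if (p : ℕ) = (q : ℕ) + 1 then (if (q : ℕ) % 2 = 0 then -(b * i) else a)
      else 0
    let B : Matrix (Fin n) (Fin n) F := Matrix.of fun p q =>
      if p = q then (if (p : ℕ) = 0 then b else 0)
      else if (q : ℕ) = (p : ℕ) + 1 then (if (p : ℕ) % 2 = 0 then -(a * i) else b)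
      else if (p : ℕ) = (q : ℕ) + 1 then (if (q : ℕ) % 2 = 0 then a * i else b)
      else 0
    let A' : Matrix (Fin n) (Fin n) F := Matrix.of fun p q =>
      if p = q then (if (p : ℕ) = 0 then a else 0)
      else if (q : ℕ) = (p : ℕ) + 1 then (if (p : ℕ) % 2 = 0 then b else a)
      else if (p : ℕ) = (q : ℕ) + 1 then (if (q : ℕ) % 2 = 0 then b else a)
      else 0
    let B' : Matrix (Fin n) (Fin n) F := Matrix.of fun p q =>
      if p = q then (if (p : ℕ) = 0 then b else 0)
      else if (q : ℕ) = (p : ℕ) + 1 then (if (p : ℕ) % 2 = 0 then -a else b)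
      else if (p : ℕ) = (q : ℕ) + 1 then (if (q : ℕ) % 2 = 0 then -a else b)
      else 0
    IsUnit S ∧ starMat σ S * A * S = A' ∧ starMat σ S * B * S = B' := by
  intro S A B A' B'
  have hi0 : i ≠ 0 := by
    intro h; rw [h] at hi; norm_num at hi
  have hS : starMat σ S = Matrix.diagonal fun m : Fin n => σ (diagEntry i (m : ℕ)) := by
    simp only [starMat, S]
    rw [Matrix.diagonal_map (map_zero σ), Matrix.diagonal_transpose]
  refine ⟨?_, ?_, ?_⟩
  · rw [Matrix.isUnit_iff_isUnit_det]
    simp only [S, Matrix.det_diagonal]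
    rw [isUnit_iff_ne_zero]
    exact Finset.prod_ne_zero_iff.mpr fun m _ => diag_ne_zero hi0 _
  · ext p q
    rw [hS]
    simp only [S, A, A', Matrix.mul_diagonal, Matrix.diagonal_mul, Matrix.of_apply]
    split_ifs with h1 h2 h3 h4 h5 h6
    · have hk := key0 σ hi hsi (p : ℕ)
      subst h1; linear_combination a * hk
    · ring
    · have hk := key1 σ hi hsi (p : ℕ)
      rw [if_pos h4] at hk
      rw [h3]
      linear_combination (b * i) * hk - b * hi
    · have hk := key1 σ hi hsi (p : ℕ)
      rw [if_neg h4] at hk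
      rw [h3]
      linear_combination a * hk
    · have hk := key2 σ hi hsi (q : ℕ)
      rw [if_pos h6] at hk
      rw [h5]
      linear_combination -(b * i) * hk - b * hi
    · have hk := key2 σ hi hsi (q : ℕ)
      rw [if_neg h6] at hk
      rw [h5]
      linear_combination a * hk
    · ring
  · ext p q
    rw [hS]
    simp only [S, B, B', Matrix.mul_diagonal, Matrix.diagonal_mul, Matrix.of_apply]
    split_ifs with h1 h2 h3 h4 h5 h6
    · have hk := key0 σ hi hsi (p : ℕ)
      subst h1; linear_combination b * hk
    · ring
    · have hk := key1 σ hi hsi (p : ℕ)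
      rw [if_pos h4] at hk
      rw [h3]
      linear_combination -(a * i) * hk + a * hi
    · have hk := key1 σ hi hsi (p : ℕ)
      rw [if_neg h4] at hk
      rw [h3]
      linear_combination b * hk
    · have hk := key2 σ hi hsi (q : ℕ)
      rw [if_pos h6] at hk
      rw [h5]
      linear_combination (a * i) * hk + a * hi
    · have hk := key2 σ hi hsi (q : ℕ)
      rw [if_neg h6] at hk
      rw [h5]
      linear_combination b * hk
    · ring
end
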